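/- arXiv:1711.10465 — 8 statements merged into one kernel-verified Lean document; each statement's English description precedes it below -/
import Mathlib

section
/- Let B1 be a behavior in a prepare-and-measure scenario S1 and B2 a behavior in a prepare-and-measure scenario S2. Then B1 and B2 are both noncontextual (in S1 and S2 respectively) if and only if the juxtaposition B1 ⊗ B2 is noncontextual in the juxtaposed scenario S1 ⊗ S2. -/
open scoped BigOperators
set_option maxHeartbeats 1000000

/-- A probability distribution on a finite type. -/
def IsDist {X : Type} [Fintype X] (f : X → ℝ) : Prop :=
  (∀ x, 0 ≤ f x) ∧ ∑ x, f x = 1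

lemma isDist_prodFun {A B : Type} [Fintype A] [Fintype B] {f : A → ℝ} {g : B → ℝ}
    (hf : IsDist f) (hg : IsDist g) :
    IsDist (fun x : A × B => f x.1 * g x.2) := by
  refine ⟨fun x => mul_nonneg (hf.1 x.1) (hg.1 x.2), ?_⟩
  calc ∑ x : A × B, f x.1 * g x.2 = ∑ a, ∑ b, f a * g b := by
        rw [Fintype.sum_prod_type]
    _ = (∑ a, f a) * (∑ b, g b) := by rw [Finset.sum_mul_sum]
    _ = 1 := by rw [hf.2, hg.2, mul_one]

lemma isDist_prodFun' {K1 J1 K2 J2 : Type} [Fintype K1] [Fintype J1] [Fintype K2] [Fintype J2]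
    {f : K1 × J1 → ℝ} {g : K2 × J2 → ℝ} (hf : IsDist f) (hg : IsDist g) :
    IsDist (fun kj : (K1 × K2) × (J1 × J2) => f (kj.1.1, kj.2.1) * g (kj.1.2, kj.2.2)) := by
  refine ⟨fun kj => mul_nonneg (hf.1 _) (hg.1 _), ?_⟩
  have h := (isDist_prodFun hf hg).2
  rw [← h]
  exact Fintype.sum_equiv (Equiv.prodProdProdComm K1 K2 J1 J2) _ _ (by rintro ⟨⟨a, b⟩, c, d⟩; rfl)

/-- A prepare-and-measure scenario: finite nonempty sets of preparations `I`,
measurements `J` and outcomes `K` (carried as type-class assumptions on the index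
types), together with a family of preparation operational equivalences (pairs of
probability distributions on `I`) and a family of measurement operational
equivalences (pairs of probability distributions on `K × J`). -/
structure Scenario (I J K : Type) [Fintype I] [Fintype J] [Fintype K] where
  PE : Type
  ME : Type
  prepEq : PE → (I → ℝ) × (I → ℝ)
  measEq : ME → (K × J → ℝ) × (K × J → ℝ)
  prep_dist : ∀ s, IsDist (prepEq s).1 ∧ IsDist (prepEq s).2
  meas_dist : ∀ r, IsDist (measEq r).1 ∧ IsDist (measEq r).2

/-- A behavior: a family `p k ∣ j, i` of nonnegative reals, normalized over outcomes. -/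
def IsBehavior {I J K : Type} [Fintype I] [Fintype J] [Fintype K]
    (p : I → J → K → ℝ) : Prop :=
  (∀ i j k, 0 ≤ p i j k) ∧ ∀ i j, ∑ k, p i j k = 1

/-- A behavior is noncontextual in a scenario `S` if it admits a universally
noncontextual ontological model over a finite ontic space. -/
def Noncontextual {I J K : Type} [Fintype I] [Fintype J] [Fintype K]
    (S : Scenario I J K) (p : I → J → K → ℝ) : Prop :=
  ∃ (n : ℕ) (μ : I → Fin n → ℝ) (ξ : Fin n → J → K → ℝ),
    (∀ i, IsDist (μ i)) ∧
    (∀ l j, IsDist (ξ l j)) ∧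
    (∀ i j k, p i j k = ∑ l, ξ l j k * μ i l) ∧
    (∀ s l, ∑ i, ((S.prepEq s).1 i - (S.prepEq s).2 i) * μ i l = 0) ∧
    (∀ r l, ∑ kj : K × J, ((S.measEq r).1 kj - (S.measEq r).2 kj) * ξ l kj.2 kj.1 = 0)

/-- The juxtaposition of two behaviors. -/
def prodBehavior {I1 J1 K1 I2 J2 K2 : Type}
    [Fintype I1] [Fintype J1] [Fintype K1] [Fintype I2] [Fintype J2] [Fintype K2]
    (p1 : I1 → J1 → K1 → ℝ) (p2 : I2 → J2 → K2 → ℝ) :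
    I1 × I2 → J1 × J2 → K1 × K2 → ℝ :=
  fun i j k => p1 i.1 j.1 k.1 * p2 i.2 j.2 k.2

/-- The juxtaposition `S1 ⊗ S2` of two scenarios: preparation (resp. measurement)
equivalences are all pairs `(α ⊗ γ, β ⊗ γ)` with `(α, β)` an equivalence of `S1` and
`γ` an arbitrary distribution on the preparations (resp. measurement events) of `S2`,
together with the symmetric ones coming from `S2`. -/
def Scenario.prod {I1 J1 K1 I2 J2 K2 : Type}
    [Fintype I1] [Fintype J1] [Fintype K1] [Fintype I2] [Fintype J2] [Fintype K2]
    (S1 : Scenario I1 J1 K1) (S2 : Scenario I2 J2 K2) :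
    Scenario (I1 × I2) (J1 × J2) (K1 × K2) where
  PE := (S1.PE × {γ : I2 → ℝ // IsDist γ}) ⊕ (S2.PE × {γ : I1 → ℝ // IsDist γ})
  ME := (S1.ME × {γ : K2 × J2 → ℝ // IsDist γ}) ⊕ (S2.ME × {γ : K1 × J1 → ℝ // IsDist γ})
  prepEq := fun e =>
    match e with
    | Sum.inl (s, γ) =>
        (fun i => (S1.prepEq s).1 i.1 * γ.1 i.2, fun i => (S1.prepEq s).2 i.1 * γ.1 i.2)
    | Sum.inr (s, γ) =>
        (fun i => γ.1 i.1 * (S2.prepEq s).1 i.2, fun i => γ.1 i.1 * (S2.prepEq s).2 i.2)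
  measEq := fun e =>
    match e with
    | Sum.inl (r, γ) =>
        (fun kj => (S1.measEq r).1 (kj.1.1, kj.2.1) * γ.1 (kj.1.2, kj.2.2),
         fun kj => (S1.measEq r).2 (kj.1.1, kj.2.1) * γ.1 (kj.1.2, kj.2.2))
    | Sum.inr (r, γ) =>
        (fun kj => γ.1 (kj.1.1, kj.2.1) * (S2.measEq r).1 (kj.1.2, kj.2.2),
         fun kj => γ.1 (kj.1.1, kj.2.1) * (S2.measEq r).2 (kj.1.2, kj.2.2))
  prep_dist := by
    rintro (⟨s, γ⟩ | ⟨s, γ⟩)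
    · exact ⟨isDist_prodFun (S1.prep_dist s).1 γ.2, isDist_prodFun (S1.prep_dist s).2 γ.2⟩
    · exact ⟨isDist_prodFun γ.2 (S2.prep_dist s).1, isDist_prodFun γ.2 (S2.prep_dist s).2⟩
  meas_dist := by
    rintro (⟨r, γ⟩ | ⟨r, γ⟩)
    · exact ⟨isDist_prodFun' (S1.meas_dist r).1 γ.2, isDist_prodFun' (S1.meas_dist r).2 γ.2⟩
    · exact ⟨isDist_prodFun' γ.2 (S2.meas_dist r).1, isDist_prodFun' γ.2 (S2.meas_dist r).2⟩

/-- A free operation: a pre-processing of preparations, a pre-processing of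
measurement choices and, for each simulated measurement, a post-processing of the
outcomes, all given by stochastic maps. -/
structure FreeOp (I J K I' J' K' : Type)
    [Fintype I] [Fintype J] [Fintype K] [Fintype I'] [Fintype J'] [Fintype K'] where
  qP : I' → I → ℝ
  qM : J' → J → ℝ
  qO : J' → K → K' → ℝ
  qP_dist : ∀ i', IsDist (qP i')
  qM_dist : ∀ j', IsDist (qM j')
  qO_dist : ∀ j' k, IsDist (qO j' k)

/-- Action of a free operation on a behavior. -/
def FreeOp.apply {I J K I' J' K' : Type}
    [Fintype I] [Fintype J] [Fintype K] [Fintype I'] [Fintype J'] [Fintype K']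
    (T : FreeOp I J K I' J' K') (p : I → J → K → ℝ) : I' → J' → K' → ℝ :=
  fun i' j' k' => ∑ i, ∑ j, ∑ k, T.qO j' k k' * p i j k * T.qM j' j * T.qP i' i

/-- `T` lifts the operational equivalences of `S'` to those of `S`. -/
def LiftsEquivalences {I J K I' J' K' : Type}
    [Fintype I] [Fintype J] [Fintype K] [Fintype I'] [Fintype J'] [Fintype K']
    (S : Scenario I J K) (S' : Scenario I' J' K') (T : FreeOp I J K I' J' K') : Prop :=
  (∀ s' : S'.PE, ∃ s : S.PE, ∀ i : I,
      ∑ i' : I', ((S'.prepEq s').1 i' - (S'.prepEq s').2 i') * T.qP i' i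
        = (S.prepEq s).1 i - (S.prepEq s).2 i) ∧
  (∀ r' : S'.ME, ∃ r : S.ME, ∀ k : K, ∀ j : J,
      ∑ kj' : K' × J', ((S'.measEq r').1 kj' - (S'.measEq r').2 kj') *
          (T.qO kj'.2 k kj'.1 * T.qM kj'.2 j)
        = (S.measEq r).1 (k, j) - (S.measEq r).2 (k, j))

/-- The contextual fraction. -/
noncomputable def ctxFraction {I J K : Type} [Fintype I] [Fintype J] [Fintype K]
    (S : Scenario I J K) (p : I → J → K → ℝ) : ℝ :=
  1 - sSup {l : ℝ | 0 ≤ l ∧ l ≤ 1 ∧ ∃ q q' : I → J → K → ℝ,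
      Noncontextual S q ∧ IsBehavior q' ∧
      ∀ i j k, p i j k = l * q i j k + (1 - l) * q' i j k}

/-- The robustness of contextuality. -/
noncomputable def robustness {I J K : Type} [Fintype I] [Fintype J] [Fintype K]
    (S : Scenario I J K) (p : I → J → K → ℝ) : ℝ :=
  sInf {l : ℝ | 0 ≤ l ∧ l ≤ 1 ∧ ∃ q : I → J → K → ℝ, Noncontextual S q ∧
      Noncontextual S (fun i j k => l * q i j k + (1 - l) * p i j k)}

/-- The robustness with respect to a fixed reference behavior. -/
noncomputable def refRobustness {I J K : Type} [Fintype I] [Fintype J] [Fintype K]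
    (S : Scenario I J K) (pref p : I → J → K → ℝ) : ℝ :=
  sInf {l : ℝ | 0 ≤ l ∧ l ≤ 1 ∧
      Noncontextual S (fun i j k => l * pref i j k + (1 - l) * p i j k)}

/-- One term of the Kullback-Leibler divergence, with the conventions
`0 log (0/q) = 0` and `p log (p/0) = ∞` for `p > 0`. -/
noncomputable def klTerm (p q : ℝ) : EReal :=
  if p = 0 then 0 else if q = 0 then ⊤ else ((p * Real.log (p / q) : ℝ) : EReal)

/-- KL divergence between behaviors: maximum over preparations and measurements. -/
noncomputable def DKL {I J K : Type} [Fintype I] [Fintype J] [Fintype K]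
    (p q : I → J → K → ℝ) : EReal :=
  ⨆ i : I, ⨆ j : J, ∑ k : K, klTerm (p i j k) (q i j k)

/-- The relative entropy of contextuality. -/
noncomputable def relEntCtx {I J K : Type} [Fintype I] [Fintype J] [Fintype K]
    (S : Scenario I J K) (p : I → J → K → ℝ) : EReal :=
  ⨅ q ∈ {q : I → J → K → ℝ | Noncontextual S q}, DKL p q

/-- ℓ1 distance between behaviors: maximum over preparations and measurements. -/
noncomputable def D1 {I J K : Type} [Fintype I] [Fintype J] [Fintype K]
    (p q : I → J → K → ℝ) : ℝ :=
  ⨆ ij : I × J, ∑ k : K, |p ij.1 ij.2 k - q ij.1 ij.2 k|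

/-- The ℓ1-contextuality distance. -/
noncomputable def l1CtxDistance {I J K : Type} [Fintype I] [Fintype J] [Fintype K]
    (S : Scenario I J K) (p : I → J → K → ℝ) : ℝ :=
  sInf {d : ℝ | ∃ q : I → J → K → ℝ, Noncontextual S q ∧ D1 p q = d}

/-- The uniform ℓ1-contextuality distance. -/
noncomputable def uniformL1CtxDistance {I J K : Type} [Fintype I] [Fintype J] [Fintype K]
    (S : Scenario I J K) (p : I → J → K → ℝ) : ℝ :=
  (1 / (2 * (Fintype.card I : ℝ) * (Fintype.card J : ℝ))) *
    sInf {d : ℝ | ∃ q : I → J → K → ℝ, Noncontextual S q ∧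
      ∑ i, ∑ j, ∑ k, |p i j k - q i j k| = d}

/-- The measurement-assignment polytope of a scenario. -/
def MAPolytope {I J K : Type} [Fintype I] [Fintype J] [Fintype K]
    (S : Scenario I J K) : Set (K × J → ℝ) :=
  {ξ | (∀ kj, 0 ≤ ξ kj) ∧ (∀ j, ∑ k, ξ (k, j) = 1) ∧
    ∀ r, ∑ kj : K × J, ((S.measEq r).1 kj - (S.measEq r).2 kj) * ξ kj = 0}

section Aux

lemma sum_prod_factor {A B : Type} [Fintype A] [Fintype B] (f : A → ℝ) (g : B → ℝ) :
    ∑ x : A × B, f x.1 * g x.2 = (∑ a, f a) * (∑ b, g b) := by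
  rw [Fintype.sum_prod_type, Finset.sum_mul_sum]

lemma isDist_delta {A : Type} [Fintype A] [DecidableEq A] (a0 : A) :
    IsDist (fun a => if a = a0 then (1 : ℝ) else 0) := by
  constructor
  · intro a; by_cases h : a = a0 <;> simp [h]
  · simp

lemma sum_delta_mul {B : Type} [Fintype B] [DecidableEq B] (b0 : B) (c d : ℝ) (g : B → ℝ) :
    ∑ b, (c * (if b = b0 then (1 : ℝ) else 0) - d * (if b = b0 then (1 : ℝ) else 0)) * g b
      = (c - d) * g b0 := by
  calc ∑ b, (c * (if b = b0 then (1 : ℝ) else 0) - d * (if b = b0 then (1 : ℝ) else 0)) * g b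
      = ∑ b, if b = b0 then (c - d) * g b else 0 := by
        refine Finset.sum_congr rfl fun b _ => ?_
        by_cases h : b = b0 <;> simp [h]
    _ = (c - d) * g b0 := by simp

end Aux

/-- `B1` and `B2` are both noncontextual iff the juxtaposition
`B1 ⊗ B2` is noncontextual in the juxtaposed scenario `S1 ⊗ S2`. -/
theorem juxtaposition_noncontextual_iff
    {I1 J1 K1 I2 J2 K2 : Type}
    [Fintype I1] [Fintype J1] [Fintype K1] [Fintype I2] [Fintype J2] [Fintype K2]
    [Nonempty I1] [Nonempty J1] [Nonempty K1] [Nonempty I2] [Nonempty J2] [Nonempty K2]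
    (S1 : Scenario I1 J1 K1) (S2 : Scenario I2 J2 K2)
    (p1 : I1 → J1 → K1 → ℝ) (p2 : I2 → J2 → K2 → ℝ)
    (hp1 : IsBehavior p1) (hp2 : IsBehavior p2) :
    (Noncontextual S1 p1 ∧ Noncontextual S2 p2) ↔
      Noncontextual (S1.prod S2) (prodBehavior p1 p2) := by
  classical
  constructor
  · rintro ⟨⟨n1, μ1, ξ1, hμ1, hξ1, hP1, hpe1, hme1⟩, n2, μ2, ξ2, hμ2, hξ2, hP2, hpe2, hme2⟩
    refine ⟨n1 * n2,
      fun i l => μ1 i.1 (finProdFinEquiv.symm l).1 * μ2 i.2 (finProdFinEquiv.symm l).2,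
      fun l j k => ξ1 (finProdFinEquiv.symm l).1 j.1 k.1 * ξ2 (finProdFinEquiv.symm l).2 j.2 k.2,
      ?_, ?_, ?_, ?_, ?_⟩
    · intro i
      refine ⟨fun l => mul_nonneg ((hμ1 i.1).1 _) ((hμ2 i.2).1 _), ?_⟩
      calc ∑ l : Fin (n1 * n2),
            μ1 i.1 (finProdFinEquiv.symm l).1 * μ2 i.2 (finProdFinEquiv.symm l).2
          = ∑ q : Fin n1 × Fin n2, μ1 i.1 q.1 * μ2 i.2 q.2 :=
            Fintype.sum_equiv finProdFinEquiv.symm _ _ (fun l => rfl)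
        _ = (∑ a, μ1 i.1 a) * (∑ b, μ2 i.2 b) := sum_prod_factor _ _
        _ = 1 := by rw [(hμ1 i.1).2, (hμ2 i.2).2, mul_one]
    · intro l j
      exact isDist_prodFun (hξ1 _ j.1) (hξ2 _ j.2)
    · intro i j k
      show p1 i.1 j.1 k.1 * p2 i.2 j.2 k.2 = _
      calc p1 i.1 j.1 k.1 * p2 i.2 j.2 k.2
          = (∑ a, ξ1 a j.1 k.1 * μ1 i.1 a) * (∑ b, ξ2 b j.2 k.2 * μ2 i.2 b) := by
            rw [hP1, hP2]
        _ = ∑ q : Fin n1 × Fin n2,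
              (ξ1 q.1 j.1 k.1 * μ1 i.1 q.1) * (ξ2 q.2 j.2 k.2 * μ2 i.2 q.2) :=
            (sum_prod_factor _ _).symm
        _ = ∑ q : Fin n1 × Fin n2,
              (ξ1 q.1 j.1 k.1 * ξ2 q.2 j.2 k.2) * (μ1 i.1 q.1 * μ2 i.2 q.2) :=
            Finset.sum_congr rfl fun q _ => by ring
        _ = _ := (Fintype.sum_equiv finProdFinEquiv.symm _ _ (fun l => rfl)).symm
    · rintro (⟨s, γ⟩ | ⟨s, γ⟩) l
      · calc ∑ i : I1 × I2,
              ((S1.prepEq s).1 i.1 * γ.1 i.2 - (S1.prepEq s).2 i.1 * γ.1 i.2) *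
                (μ1 i.1 (finProdFinEquiv.symm l).1 * μ2 i.2 (finProdFinEquiv.symm l).2)
            = ∑ i : I1 × I2,
                (((S1.prepEq s).1 i.1 - (S1.prepEq s).2 i.1) * μ1 i.1 (finProdFinEquiv.symm l).1) *
                  (γ.1 i.2 * μ2 i.2 (finProdFinEquiv.symm l).2) :=
              Finset.sum_congr rfl fun i _ => by ring
          _ = (∑ a, ((S1.prepEq s).1 a - (S1.prepEq s).2 a) * μ1 a (finProdFinEquiv.symm l).1) *
                (∑ b, γ.1 b * μ2 b (finProdFinEquiv.symm l).2) :=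
              sum_prod_factor
                (fun a => ((S1.prepEq s).1 a - (S1.prepEq s).2 a) * μ1 a (finProdFinEquiv.symm l).1)
                (fun b => γ.1 b * μ2 b (finProdFinEquiv.symm l).2)
          _ = 0 := by rw [hpe1 s, zero_mul]
      · calc ∑ i : I1 × I2,
              (γ.1 i.1 * (S2.prepEq s).1 i.2 - γ.1 i.1 * (S2.prepEq s).2 i.2) *
                (μ1 i.1 (finProdFinEquiv.symm l).1 * μ2 i.2 (finProdFinEquiv.symm l).2)
            = ∑ i : I1 × I2,
                (γ.1 i.1 * μ1 i.1 (finProdFinEquiv.symm l).1) *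
                  (((S2.prepEq s).1 i.2 - (S2.prepEq s).2 i.2) * μ2 i.2 (finProdFinEquiv.symm l).2) :=
              Finset.sum_congr rfl fun i _ => by ring
          _ = (∑ a, γ.1 a * μ1 a (finProdFinEquiv.symm l).1) *
                (∑ b, ((S2.prepEq s).1 b - (S2.prepEq s).2 b) * μ2 b (finProdFinEquiv.symm l).2) :=
              sum_prod_factor (fun a => γ.1 a * μ1 a (finProdFinEquiv.symm l).1)
                (fun b => ((S2.prepEq s).1 b - (S2.prepEq s).2 b) * μ2 b (finProdFinEquiv.symm l).2)
          _ = 0 := by rw [hpe2 s, mul_zero]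
    · rintro (⟨r, γ⟩ | ⟨r, γ⟩) l
      · calc ∑ kj : (K1 × K2) × (J1 × J2),
              ((S1.measEq r).1 (kj.1.1, kj.2.1) * γ.1 (kj.1.2, kj.2.2) -
                  (S1.measEq r).2 (kj.1.1, kj.2.1) * γ.1 (kj.1.2, kj.2.2)) *
                (ξ1 (finProdFinEquiv.symm l).1 kj.2.1 kj.1.1 *
                  ξ2 (finProdFinEquiv.symm l).2 kj.2.2 kj.1.2)
            = ∑ x : (K1 × J1) × (K2 × J2),
                (((S1.measEq r).1 x.1 - (S1.measEq r).2 x.1) *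
                    ξ1 (finProdFinEquiv.symm l).1 x.1.2 x.1.1) *
                  (γ.1 x.2 * ξ2 (finProdFinEquiv.symm l).2 x.2.2 x.2.1) :=
              (Fintype.sum_equiv (Equiv.prodProdProdComm K1 J1 K2 J2) _ _
                (by rintro ⟨⟨k1, j1⟩, k2, j2⟩; simp only [Equiv.prodProdProdComm_apply]; ring)).symm
          _ = (∑ a : K1 × J1, ((S1.measEq r).1 a - (S1.measEq r).2 a) *
                  ξ1 (finProdFinEquiv.symm l).1 a.2 a.1) *
                (∑ b : K2 × J2, γ.1 b * ξ2 (finProdFinEquiv.symm l).2 b.2 b.1) :=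
              sum_prod_factor
                (fun a : K1 × J1 => ((S1.measEq r).1 a - (S1.measEq r).2 a) *
                  ξ1 (finProdFinEquiv.symm l).1 a.2 a.1)
                (fun b : K2 × J2 => γ.1 b * ξ2 (finProdFinEquiv.symm l).2 b.2 b.1)
          _ = 0 := by rw [hme1 r, zero_mul]
      · calc ∑ kj : (K1 × K2) × (J1 × J2),
              (γ.1 (kj.1.1, kj.2.1) * (S2.measEq r).1 (kj.1.2, kj.2.2) -
                  γ.1 (kj.1.1, kj.2.1) * (S2.measEq r).2 (kj.1.2, kj.2.2)) *
                (ξ1 (finProdFinEquiv.symm l).1 kj.2.1 kj.1.1 *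
                  ξ2 (finProdFinEquiv.symm l).2 kj.2.2 kj.1.2)
            = ∑ x : (K1 × J1) × (K2 × J2),
                (γ.1 x.1 * ξ1 (finProdFinEquiv.symm l).1 x.1.2 x.1.1) *
                  (((S2.measEq r).1 x.2 - (S2.measEq r).2 x.2) *
                    ξ2 (finProdFinEquiv.symm l).2 x.2.2 x.2.1) :=
              (Fintype.sum_equiv (Equiv.prodProdProdComm K1 J1 K2 J2) _ _
                (by rintro ⟨⟨k1, j1⟩, k2, j2⟩; simp only [Equiv.prodProdProdComm_apply]; ring)).symm
          _ = (∑ a : K1 × J1, γ.1 a * ξ1 (finProdFinEquiv.symm l).1 a.2 a.1) *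
                (∑ b : K2 × J2, ((S2.measEq r).1 b - (S2.measEq r).2 b) *
                  ξ2 (finProdFinEquiv.symm l).2 b.2 b.1) :=
              sum_prod_factor
                (fun a : K1 × J1 => γ.1 a * ξ1 (finProdFinEquiv.symm l).1 a.2 a.1)
                (fun b : K2 × J2 => ((S2.measEq r).1 b - (S2.measEq r).2 b) *
                  ξ2 (finProdFinEquiv.symm l).2 b.2 b.1)
          _ = 0 := by rw [hme2 r, mul_zero]
  · rintro ⟨n, μ, ξ, hμ, hξ, hP, hpe, hme⟩
    obtain ⟨i1₀⟩ := (inferInstance : Nonempty I1)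
    obtain ⟨j1₀⟩ := (inferInstance : Nonempty J1)
    obtain ⟨i2₀⟩ := (inferInstance : Nonempty I2)
    obtain ⟨j2₀⟩ := (inferInstance : Nonempty J2)
    constructor
    · refine ⟨n, fun i1 l => μ (i1, i2₀) l,
        fun l j1 k1 => ∑ k2, ξ l (j1, j2₀) (k1, k2), ?_, ?_, ?_, ?_, ?_⟩
      · intro i1; exact hμ (i1, i2₀)
      · intro l j1
        refine ⟨fun k1 => Finset.sum_nonneg fun k2 _ => (hξ l (j1, j2₀)).1 (k1, k2), ?_⟩
        calc ∑ k1, ∑ k2, ξ l (j1, j2₀) (k1, k2)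
            = ∑ k : K1 × K2, ξ l (j1, j2₀) k := (Fintype.sum_prod_type _).symm
          _ = 1 := (hξ l (j1, j2₀)).2
      · intro i1 j1 k1
        calc p1 i1 j1 k1 = p1 i1 j1 k1 * ∑ k2, p2 i2₀ j2₀ k2 := by
              rw [(hp2.2 i2₀ j2₀), mul_one]
          _ = ∑ k2, prodBehavior p1 p2 (i1, i2₀) (j1, j2₀) (k1, k2) := by
              rw [Finset.mul_sum]; rfl
          _ = ∑ k2, ∑ l, ξ l (j1, j2₀) (k1, k2) * μ (i1, i2₀) l := by
              refine Finset.sum_congr rfl fun k2 _ => hP (i1, i2₀) (j1, j2₀) (k1, k2)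
          _ = ∑ l, (∑ k2, ξ l (j1, j2₀) (k1, k2)) * μ (i1, i2₀) l := by
              rw [Finset.sum_comm]
              exact Finset.sum_congr rfl fun l _ => (Finset.sum_mul _ _ _).symm
      · intro s l
        have h := hpe (Sum.inl (s, ⟨fun a => if a = i2₀ then (1 : ℝ) else 0, isDist_delta i2₀⟩)) l
        simp only [Scenario.prod] at h
        calc ∑ i1, ((S1.prepEq s).1 i1 - (S1.prepEq s).2 i1) * μ (i1, i2₀) l
            = ∑ i1, ∑ i2, ((S1.prepEq s).1 i1 * (if i2 = i2₀ then (1 : ℝ) else 0) -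
                (S1.prepEq s).2 i1 * (if i2 = i2₀ then (1 : ℝ) else 0)) * μ (i1, i2) l :=
              Finset.sum_congr rfl fun i1 _ =>
                (sum_delta_mul i2₀ _ _ (fun i2 => μ (i1, i2) l)).symm
          _ = ∑ i : I1 × I2, ((S1.prepEq s).1 i.1 * (if i.2 = i2₀ then (1 : ℝ) else 0) -
                (S1.prepEq s).2 i.1 * (if i.2 = i2₀ then (1 : ℝ) else 0)) * μ i l :=
              (Fintype.sum_prod_type (fun i : I1 × I2 =>
                ((S1.prepEq s).1 i.1 * (if i.2 = i2₀ then (1 : ℝ) else 0) -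
                  (S1.prepEq s).2 i.1 * (if i.2 = i2₀ then (1 : ℝ) else 0)) * μ i l)).symm
          _ = 0 := h
      · intro r l
        have key : ∀ k2 : K2, ∑ kj : K1 × J1,
            ((S1.measEq r).1 kj - (S1.measEq r).2 kj) * ξ l (kj.2, j2₀) (kj.1, k2) = 0 := by
          intro k2
          have h := hme (Sum.inl (r, ⟨fun a => if a = (k2, j2₀) then (1 : ℝ) else 0,
            isDist_delta (k2, j2₀)⟩)) l
          simp only [Scenario.prod] at h
          calc ∑ kj : K1 × J1,
                ((S1.measEq r).1 kj - (S1.measEq r).2 kj) * ξ l (kj.2, j2₀) (kj.1, k2)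
              = ∑ x1 : K1 × J1, ∑ x2 : K2 × J2,
                  ((S1.measEq r).1 x1 * (if x2 = (k2, j2₀) then (1 : ℝ) else 0) -
                    (S1.measEq r).2 x1 * (if x2 = (k2, j2₀) then (1 : ℝ) else 0)) *
                    ξ l (x1.2, x2.2) (x1.1, x2.1) :=
                Finset.sum_congr rfl fun x1 _ =>
                  (sum_delta_mul (k2, j2₀) _ _ (fun x2 : K2 × J2 => ξ l (x1.2, x2.2) (x1.1, x2.1))).symm
            _ = ∑ x : (K1 × J1) × (K2 × J2),
                  ((S1.measEq r).1 x.1 * (if x.2 = (k2, j2₀) then (1 : ℝ) else 0) -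
                    (S1.measEq r).2 x.1 * (if x.2 = (k2, j2₀) then (1 : ℝ) else 0)) *
                    ξ l (x.1.2, x.2.2) (x.1.1, x.2.1) :=
                (Fintype.sum_prod_type (fun x : (K1 × J1) × (K2 × J2) =>
                  ((S1.measEq r).1 x.1 * (if x.2 = (k2, j2₀) then (1 : ℝ) else 0) -
                    (S1.measEq r).2 x.1 * (if x.2 = (k2, j2₀) then (1 : ℝ) else 0)) *
                    ξ l (x.1.2, x.2.2) (x.1.1, x.2.1))).symm
            _ = ∑ kj : (K1 × K2) × (J1 × J2),
                  ((S1.measEq r).1 (kj.1.1, kj.2.1) *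
                      (if (kj.1.2, kj.2.2) = (k2, j2₀) then (1 : ℝ) else 0) -
                    (S1.measEq r).2 (kj.1.1, kj.2.1) *
                      (if (kj.1.2, kj.2.2) = (k2, j2₀) then (1 : ℝ) else 0)) *
                    ξ l kj.2 kj.1 :=
                Fintype.sum_equiv (Equiv.prodProdProdComm K1 J1 K2 J2) _ _
                  (by rintro ⟨⟨k1, j1⟩, k2', j2'⟩; rfl)
            _ = 0 := h
        calc ∑ kj : K1 × J1,
              ((S1.measEq r).1 kj - (S1.measEq r).2 kj) * (∑ k2, ξ l (kj.2, j2₀) (kj.1, k2))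
            = ∑ kj : K1 × J1, ∑ k2,
                ((S1.measEq r).1 kj - (S1.measEq r).2 kj) * ξ l (kj.2, j2₀) (kj.1, k2) :=
              Finset.sum_congr rfl fun kj _ => Finset.mul_sum _ _ _
          _ = ∑ k2, ∑ kj : K1 × J1,
                ((S1.measEq r).1 kj - (S1.measEq r).2 kj) * ξ l (kj.2, j2₀) (kj.1, k2) :=
              Finset.sum_comm
          _ = 0 := by simp [key]
    · refine ⟨n, fun i2 l => μ (i1₀, i2) l,
        fun l j2 k2 => ∑ k1, ξ l (j1₀, j2) (k1, k2), ?_, ?_, ?_, ?_, ?_⟩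
      · intro i2; exact hμ (i1₀, i2)
      · intro l j2
        refine ⟨fun k2 => Finset.sum_nonneg fun k1 _ => (hξ l (j1₀, j2)).1 (k1, k2), ?_⟩
        calc ∑ k2, ∑ k1, ξ l (j1₀, j2) (k1, k2)
            = ∑ k1, ∑ k2, ξ l (j1₀, j2) (k1, k2) := Finset.sum_comm
          _ = ∑ k : K1 × K2, ξ l (j1₀, j2) k := (Fintype.sum_prod_type _).symm
          _ = 1 := (hξ l (j1₀, j2)).2
      · intro i2 j2 k2
        calc p2 i2 j2 k2 = (∑ k1, p1 i1₀ j1₀ k1) * p2 i2 j2 k2 := by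
              rw [(hp1.2 i1₀ j1₀), one_mul]
          _ = ∑ k1, prodBehavior p1 p2 (i1₀, i2) (j1₀, j2) (k1, k2) := by
              rw [Finset.sum_mul]; rfl
          _ = ∑ k1, ∑ l, ξ l (j1₀, j2) (k1, k2) * μ (i1₀, i2) l :=
              Finset.sum_congr rfl fun k1 _ => hP (i1₀, i2) (j1₀, j2) (k1, k2)
          _ = ∑ l, (∑ k1, ξ l (j1₀, j2) (k1, k2)) * μ (i1₀, i2) l := by
              rw [Finset.sum_comm]
              exact Finset.sum_congr rfl fun l _ => (Finset.sum_mul _ _ _).symm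
      · intro s l
        have h := hpe (Sum.inr (s, ⟨fun a => if a = i1₀ then (1 : ℝ) else 0, isDist_delta i1₀⟩)) l
        simp only [Scenario.prod] at h
        calc ∑ i2, ((S2.prepEq s).1 i2 - (S2.prepEq s).2 i2) * μ (i1₀, i2) l
            = ∑ i2, ∑ i1, ((if i1 = i1₀ then (1 : ℝ) else 0) * (S2.prepEq s).1 i2 -
                (if i1 = i1₀ then (1 : ℝ) else 0) * (S2.prepEq s).2 i2) * μ (i1, i2) l := by
              refine Finset.sum_congr rfl fun i2 _ => ?_
              have := (sum_delta_mul i1₀ ((S2.prepEq s).1 i2) ((S2.prepEq s).2 i2)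
                (fun i1 => μ (i1, i2) l)).symm
              rw [this]
              exact Finset.sum_congr rfl fun i1 _ => by ring_nf
          _ = ∑ i1, ∑ i2, ((if i1 = i1₀ then (1 : ℝ) else 0) * (S2.prepEq s).1 i2 -
                (if i1 = i1₀ then (1 : ℝ) else 0) * (S2.prepEq s).2 i2) * μ (i1, i2) l :=
              Finset.sum_comm
          _ = ∑ i : I1 × I2, ((if i.1 = i1₀ then (1 : ℝ) else 0) * (S2.prepEq s).1 i.2 -
                (if i.1 = i1₀ then (1 : ℝ) else 0) * (S2.prepEq s).2 i.2) * μ i l :=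
              (Fintype.sum_prod_type (fun i : I1 × I2 =>
                ((if i.1 = i1₀ then (1 : ℝ) else 0) * (S2.prepEq s).1 i.2 -
                  (if i.1 = i1₀ then (1 : ℝ) else 0) * (S2.prepEq s).2 i.2) * μ i l)).symm
          _ = 0 := h
      · intro r l
        have key : ∀ k1 : K1, ∑ kj : K2 × J2,
            ((S2.measEq r).1 kj - (S2.measEq r).2 kj) * ξ l (j1₀, kj.2) (k1, kj.1) = 0 := by
          intro k1
          have h := hme (Sum.inr (r, ⟨fun a => if a = (k1, j1₀) then (1 : ℝ) else 0,
            isDist_delta (k1, j1₀)⟩)) l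
          simp only [Scenario.prod] at h
          calc ∑ kj : K2 × J2,
                ((S2.measEq r).1 kj - (S2.measEq r).2 kj) * ξ l (j1₀, kj.2) (k1, kj.1)
              = ∑ x2 : K2 × J2, ∑ x1 : K1 × J1,
                  ((if x1 = (k1, j1₀) then (1 : ℝ) else 0) * (S2.measEq r).1 x2 -
                    (if x1 = (k1, j1₀) then (1 : ℝ) else 0) * (S2.measEq r).2 x2) *
                    ξ l (x1.2, x2.2) (x1.1, x2.1) := by
                refine Finset.sum_congr rfl fun x2 _ => ?_
                have := (sum_delta_mul (k1, j1₀) ((S2.measEq r).1 x2) ((S2.measEq r).2 x2)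
                  (fun x1 : K1 × J1 => ξ l (x1.2, x2.2) (x1.1, x2.1))).symm
                rw [this]
                exact Finset.sum_congr rfl fun x1 _ => by ring_nf
            _ = ∑ x1 : K1 × J1, ∑ x2 : K2 × J2,
                  ((if x1 = (k1, j1₀) then (1 : ℝ) else 0) * (S2.measEq r).1 x2 -
                    (if x1 = (k1, j1₀) then (1 : ℝ) else 0) * (S2.measEq r).2 x2) *
                    ξ l (x1.2, x2.2) (x1.1, x2.1) := Finset.sum_comm
            _ = ∑ x : (K1 × J1) × (K2 × J2),
                  ((if x.1 = (k1, j1₀) then (1 : ℝ) else 0) * (S2.measEq r).1 x.2 -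
                    (if x.1 = (k1, j1₀) then (1 : ℝ) else 0) * (S2.measEq r).2 x.2) *
                    ξ l (x.1.2, x.2.2) (x.1.1, x.2.1) :=
                (Fintype.sum_prod_type (fun x : (K1 × J1) × (K2 × J2) =>
                  ((if x.1 = (k1, j1₀) then (1 : ℝ) else 0) * (S2.measEq r).1 x.2 -
                    (if x.1 = (k1, j1₀) then (1 : ℝ) else 0) * (S2.measEq r).2 x.2) *
                    ξ l (x.1.2, x.2.2) (x.1.1, x.2.1))).symm
            _ = ∑ kj : (K1 × K2) × (J1 × J2),
                  ((if (kj.1.1, kj.2.1) = (k1, j1₀) then (1 : ℝ) else 0) *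
                      (S2.measEq r).1 (kj.1.2, kj.2.2) -
                    (if (kj.1.1, kj.2.1) = (k1, j1₀) then (1 : ℝ) else 0) *
                      (S2.measEq r).2 (kj.1.2, kj.2.2)) * ξ l kj.2 kj.1 :=
                Fintype.sum_equiv (Equiv.prodProdProdComm K1 J1 K2 J2) _ _
                  (by rintro ⟨⟨a, b⟩, c, d⟩; rfl)
            _ = 0 := h
        calc ∑ kj : K2 × J2,
              ((S2.measEq r).1 kj - (S2.measEq r).2 kj) * (∑ k1, ξ l (j1₀, kj.2) (k1, kj.1))
            = ∑ kj : K2 × J2, ∑ k1,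
                ((S2.measEq r).1 kj - (S2.measEq r).2 kj) * ξ l (j1₀, kj.2) (k1, kj.1) :=
              Finset.sum_congr rfl fun kj _ => Finset.mul_sum _ _ _
          _ = ∑ k1, ∑ kj : K2 × J2,
                ((S2.measEq r).1 kj - (S2.measEq r).2 kj) * ξ l (j1₀, kj.2) (k1, kj.1) :=
              Finset.sum_comm
          _ = 0 := by simp [key]
end

section
/- Free operations preserve noncontextuality: let T be a free operation from behaviors in a scenario S to behaviors in a scenario S̃ that lifts the operational equivalences. If a behavior B in S is noncontextual in S, then T(B) is a behavior in S̃ and is noncontextual in S̃. -/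
open scoped BigOperators

lemma sum_rot3 {A B C : Type} [Fintype A] [Fintype B] [Fintype C]
    (f : A → B → C → ℝ) :
    ∑ a, ∑ b, ∑ c, f a b c = ∑ b, ∑ c, ∑ a, f a b c := by
  rw [Finset.sum_comm]
  exact Finset.sum_congr rfl fun b _ => Finset.sum_comm

lemma sum_rot4 {A B C D : Type} [Fintype A] [Fintype B] [Fintype C] [Fintype D]
    (f : A → B → C → D → ℝ) :
    ∑ a, ∑ b, ∑ c, ∑ d, f a b c d = ∑ d, ∑ a, ∑ b, ∑ c, f a b c d := by
  calc ∑ a, ∑ b, ∑ c, ∑ d, f a b c d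
      = ∑ a, ∑ b, ∑ d, ∑ c, f a b c d :=
        Finset.sum_congr rfl fun a _ => Finset.sum_congr rfl fun b _ => Finset.sum_comm
    _ = ∑ a, ∑ d, ∑ b, ∑ c, f a b c d :=
        Finset.sum_congr rfl fun a _ => Finset.sum_comm
    _ = ∑ d, ∑ a, ∑ b, ∑ c, f a b c d := Finset.sum_comm

/-- free operations that lift the operational equivalences preserve
noncontextuality. -/
theorem freeOp_preserves_noncontextuality
    {I J K I' J' K' : Type}
    [Fintype I] [Fintype J] [Fintype K] [Fintype I'] [Fintype J'] [Fintype K']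
    [Nonempty I] [Nonempty J] [Nonempty K] [Nonempty I'] [Nonempty J'] [Nonempty K']
    (S : Scenario I J K) (S' : Scenario I' J' K')
    (T : FreeOp I J K I' J' K') (hT : LiftsEquivalences S S' T)
    (p : I → J → K → ℝ) (hp : IsBehavior p) (hNC : Noncontextual S p) :
    IsBehavior (T.apply p) ∧ Noncontextual S' (T.apply p) := by
  obtain ⟨n, μ, ξ, hμ, hξ, hrep, hpe, hme⟩ := hNC
  set μ' : I' → Fin n → ℝ := fun i' l => ∑ i, T.qP i' i * μ i l with hμ'def
  set ξ' : Fin n → J' → K' → ℝ :=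
    fun l j' k' => ∑ j, ∑ k, T.qM j' j * T.qO j' k k' * ξ l j k with hξ'def
  have hbeh : IsBehavior (T.apply p) := by
    constructor
    · intro i' j' k'
      refine Finset.sum_nonneg fun i _ => Finset.sum_nonneg fun j _ =>
        Finset.sum_nonneg fun k _ => ?_
      exact mul_nonneg (mul_nonneg (mul_nonneg ((T.qO_dist j' k).1 k') (hp.1 i j k))
        ((T.qM_dist j').1 j)) ((T.qP_dist i').1 i)
    · intro i' j'
      unfold FreeOp.apply
      rw [← sum_rot4 (fun i j k k' => T.qO j' k k' * p i j k * T.qM j' j * T.qP i' i)]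
      have h1 : ∀ i j k, ∑ k', T.qO j' k k' * p i j k * T.qM j' j * T.qP i' i
          = p i j k * T.qM j' j * T.qP i' i := by
        intro i j k
        rw [← Finset.sum_mul, ← Finset.sum_mul, ← Finset.sum_mul, (T.qO_dist j' k).2, one_mul]
      simp only [h1]
      have h2 : ∀ i j, ∑ k, p i j k * T.qM j' j * T.qP i' i
          = T.qM j' j * T.qP i' i := by
        intro i j
        rw [← Finset.sum_mul, ← Finset.sum_mul, hp.2 i j, one_mul]
      simp only [h2]
      have h3 : ∀ i, ∑ j, T.qM j' j * T.qP i' i = T.qP i' i := by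
        intro i
        rw [← Finset.sum_mul, (T.qM_dist j').2, one_mul]
      simp only [h3]
      exact (T.qP_dist i').2
  refine ⟨hbeh, n, μ', ξ', ?_, ?_, ?_, ?_, ?_⟩
  · intro i'
    constructor
    · intro l
      exact Finset.sum_nonneg fun i _ => mul_nonneg ((T.qP_dist i').1 i) ((hμ i).1 l)
    · rw [Finset.sum_comm]
      have : ∀ i, ∑ l, T.qP i' i * μ i l = T.qP i' i := by
        intro i
        rw [← Finset.mul_sum, (hμ i).2, mul_one]
      simp only [this]
      exact (T.qP_dist i').2
  · intro l j'
    constructor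
    · intro k'
      exact Finset.sum_nonneg fun j _ => Finset.sum_nonneg fun k _ =>
        mul_nonneg (mul_nonneg ((T.qM_dist j').1 j) ((T.qO_dist j' k).1 k')) ((hξ l j).1 k)
    · simp only [hξ'def]
      rw [sum_rot3 (fun k' j k => T.qM j' j * T.qO j' k k' * ξ l j k)]
      have h1 : ∀ j k, ∑ k', T.qM j' j * T.qO j' k k' * ξ l j k
          = T.qM j' j * ξ l j k := by
        intro j k
        rw [← Finset.sum_mul, ← Finset.mul_sum, (T.qO_dist j' k).2, mul_one]
      simp only [h1]
      have h2 : ∀ j, ∑ k, T.qM j' j * ξ l j k = T.qM j' j := by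
        intro j
        rw [← Finset.mul_sum, (hξ l j).2, mul_one]
      simp only [h2]
      exact (T.qM_dist j').2
  · intro i' j' k'
    unfold FreeOp.apply
    have h1 : ∀ i j k, T.qO j' k k' * p i j k * T.qM j' j * T.qP i' i
        = ∑ l, T.qO j' k k' * (ξ l j k * μ i l) * T.qM j' j * T.qP i' i := by
      intro i j k
      rw [hrep i j k, Finset.mul_sum, Finset.sum_mul, Finset.sum_mul]
    simp only [h1]
    rw [sum_rot4 (fun i j k l => T.qO j' k k' * (ξ l j k * μ i l) * T.qM j' j * T.qP i' i)]
    refine Finset.sum_congr rfl fun l _ => ?_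
    show (∑ i, ∑ j, ∑ k, T.qO j' k k' * (ξ l j k * μ i l) * T.qM j' j * T.qP i' i)
        = (∑ j, ∑ k, T.qM j' j * T.qO j' k k' * ξ l j k) * (∑ i, T.qP i' i * μ i l)
    rw [Finset.mul_sum]
    refine Finset.sum_congr rfl fun i _ => ?_
    rw [Finset.sum_mul]
    refine Finset.sum_congr rfl fun j _ => ?_
    rw [Finset.sum_mul]
    refine Finset.sum_congr rfl fun k _ => ?_
    ring
  · intro s' l
    obtain ⟨s, hs⟩ := hT.1 s'
    have : ∀ i', ((S'.prepEq s').1 i' - (S'.prepEq s').2 i') * μ' i' l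
        = ∑ i, ((S'.prepEq s').1 i' - (S'.prepEq s').2 i') * T.qP i' i * μ i l := by
      intro i'
      simp only [hμ'def]
      rw [Finset.mul_sum]
      exact Finset.sum_congr rfl fun i _ => by ring
    simp only [this]
    rw [Finset.sum_comm]
    have h2 : ∀ i, ∑ i', ((S'.prepEq s').1 i' - (S'.prepEq s').2 i') * T.qP i' i * μ i l
        = ((S.prepEq s).1 i - (S.prepEq s).2 i) * μ i l := by
      intro i
      rw [← Finset.sum_mul, hs i]
    simp only [h2]
    exact hpe s l
  · intro r' l
    obtain ⟨r, hr⟩ := hT.2 r'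
    have h1 : ∀ kj' : K' × J',
        ((S'.measEq r').1 kj' - (S'.measEq r').2 kj') * ξ' l kj'.2 kj'.1
        = ∑ j, ∑ k, ((S'.measEq r').1 kj' - (S'.measEq r').2 kj') *
            (T.qO kj'.2 k kj'.1 * T.qM kj'.2 j) * ξ l j k := by
      intro kj'
      simp only [hξ'def]
      rw [Finset.mul_sum]
      refine Finset.sum_congr rfl fun j _ => ?_
      rw [Finset.mul_sum]
      refine Finset.sum_congr rfl fun k _ => ?_
      ring
    simp only [h1]
    rw [sum_rot3 (fun (kj' : K' × J') j k =>
      ((S'.measEq r').1 kj' - (S'.measEq r').2 kj') *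
        (T.qO kj'.2 k kj'.1 * T.qM kj'.2 j) * ξ l j k)]
    have h2 : ∀ j k, (∑ kj' : K' × J',
        ((S'.measEq r').1 kj' - (S'.measEq r').2 kj') *
          (T.qO kj'.2 k kj'.1 * T.qM kj'.2 j) * ξ l j k)
        = ((S.measEq r).1 (k, j) - (S.measEq r).2 (k, j)) * ξ l j k := by
      intro j k
      rw [← Finset.sum_mul, hr k j]
    simp only [h2]
    have h3 := hme r l
    rw [Fintype.sum_prod_type] at h3
    rw [Finset.sum_comm] at h3
    exact h3
end

section
/- The contextual fraction is a monotone under free operations: let S and S̃ be scenarios with NC(S) and NC(S̃) nonempty, and let T be a free operation from behaviors in S to behaviors in S̃ that maps NC(S) into NC(S̃). Then for every behavior B in S, C(T(B)) ≤ C(B), where C(T(B)) is computed in the scenario S̃ and C(B) in the scenario S. -/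
open scoped BigOperators

lemma FreeOp.apply_isBehavior {I J K I' J' K' : Type}
    [Fintype I] [Fintype J] [Fintype K] [Fintype I'] [Fintype J'] [Fintype K']
    (T : FreeOp I J K I' J' K') {p : I → J → K → ℝ} (hp : IsBehavior p) :
    IsBehavior (T.apply p) := by
  constructor
  · intro i' j' k'
    refine Finset.sum_nonneg fun i _ => Finset.sum_nonneg fun j _ =>
      Finset.sum_nonneg fun k _ => ?_
    exact mul_nonneg (mul_nonneg (mul_nonneg ((T.qO_dist j' k).1 k') (hp.1 i j k))
      ((T.qM_dist j').1 j)) ((T.qP_dist i').1 i)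
  · intro i' j'
    show ∑ k', ∑ i, ∑ j, ∑ k, _ = 1
    rw [Finset.sum_comm]
    have step : ∀ i, ∑ k' : K', ∑ j, ∑ k, T.qO j' k k' * p i j k * T.qM j' j * T.qP i' i
        = T.qP i' i := by
      intro i
      rw [Finset.sum_comm]
      have step2 : ∀ j, ∑ k' : K', ∑ k, T.qO j' k k' * p i j k * T.qM j' j * T.qP i' i
          = T.qM j' j * T.qP i' i := by
        intro j
        rw [Finset.sum_comm]
        have step3 : ∀ k, ∑ k' : K', T.qO j' k k' * p i j k * T.qM j' j * T.qP i' i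
            = p i j k * T.qM j' j * T.qP i' i := by
          intro k
          rw [← Finset.sum_mul, ← Finset.sum_mul, ← Finset.sum_mul, (T.qO_dist j' k).2, one_mul]
        rw [Finset.sum_congr rfl fun k _ => step3 k, ← Finset.sum_mul, ← Finset.sum_mul,
          hp.2 i j, one_mul]
      rw [Finset.sum_congr rfl fun j _ => step2 j, ← Finset.sum_mul, (T.qM_dist j').2, one_mul]
    rw [Finset.sum_congr rfl fun i _ => step i, (T.qP_dist i').2]

lemma FreeOp.apply_convex {I J K I' J' K' : Type}
    [Fintype I] [Fintype J] [Fintype K] [Fintype I'] [Fintype J'] [Fintype K']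
    (T : FreeOp I J K I' J' K') {p q q' : I → J → K → ℝ} {l : ℝ}
    (h : ∀ i j k, p i j k = l * q i j k + (1 - l) * q' i j k) (i' : I') (j' : J') (k' : K') :
    T.apply p i' j' k' = l * T.apply q i' j' k' + (1 - l) * T.apply q' i' j' k' := by
  simp only [FreeOp.apply, Finset.mul_sum, ← Finset.sum_add_distrib]
  refine Finset.sum_congr rfl fun i _ => Finset.sum_congr rfl fun j _ =>
    Finset.sum_congr rfl fun k _ => ?_
  rw [h]; ring

/-- the contextual fraction is a monotone under free operations
mapping the noncontextual set into the noncontextual set. -/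
theorem ctxFraction_monotone
    {I J K I' J' K' : Type}
    [Fintype I] [Fintype J] [Fintype K] [Fintype I'] [Fintype J'] [Fintype K']
    [Nonempty I] [Nonempty J] [Nonempty K] [Nonempty I'] [Nonempty J'] [Nonempty K']
    (S : Scenario I J K) (S' : Scenario I' J' K')
    (hS : {q : I → J → K → ℝ | Noncontextual S q}.Nonempty)
    (hS' : {q : I' → J' → K' → ℝ | Noncontextual S' q}.Nonempty)
    (T : FreeOp I J K I' J' K')
    (hT : ∀ q : I → J → K → ℝ, Noncontextual S q → Noncontextual S' (T.apply q))
    (p : I → J → K → ℝ) (hp : IsBehavior p) :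
    ctxFraction S' (T.apply p) ≤ ctxFraction S p := by
  unfold ctxFraction
  have hsub : {l : ℝ | 0 ≤ l ∧ l ≤ 1 ∧ ∃ q q' : I → J → K → ℝ,
        Noncontextual S q ∧ IsBehavior q' ∧
        ∀ i j k, p i j k = l * q i j k + (1 - l) * q' i j k} ⊆
      {l : ℝ | 0 ≤ l ∧ l ≤ 1 ∧ ∃ q q' : I' → J' → K' → ℝ,
        Noncontextual S' q ∧ IsBehavior q' ∧
        ∀ i j k, T.apply p i j k = l * q i j k + (1 - l) * q' i j k} := by
    rintro l ⟨hl0, hl1, q, q', hq, hq', hdec⟩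
    exact ⟨hl0, hl1, T.apply q, T.apply q', hT q hq, T.apply_isBehavior hq',
      T.apply_convex hdec⟩
  have h0 : (0 : ℝ) ∈ {l : ℝ | 0 ≤ l ∧ l ≤ 1 ∧ ∃ q q' : I → J → K → ℝ,
      Noncontextual S q ∧ IsBehavior q' ∧
      ∀ i j k, p i j k = l * q i j k + (1 - l) * q' i j k} :=
    ⟨le_refl 0, zero_le_one, hS.choose, p, hS.choose_spec, hp, fun i j k => by ring⟩
  have hbdd : BddAbove {l : ℝ | 0 ≤ l ∧ l ≤ 1 ∧ ∃ q q' : I' → J' → K' → ℝ,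
      Noncontextual S' q ∧ IsBehavior q' ∧
      ∀ i j k, T.apply p i j k = l * q i j k + (1 - l) * q' i j k} :=
    ⟨1, fun x hx => hx.2.1⟩
  exact sub_le_sub_left (csSup_le_csSup hbdd ⟨0, h0⟩ hsub) 1
end

section
/- The contextual fraction is subadditive under independent juxtapositions: for behaviors B1 in a scenario S1 and B2 in a scenario S2, with NC(S1), NC(S2) and NC(S1 ⊗ S2) nonempty, one has C(B1 ⊗ B2) ≤ C(B1) + C(B2) − C(B1)·C(B2) ≤ C(B1) + C(B2), where C(B1 ⊗ B2) is computed in the juxtaposed scenario S1 ⊗ S2. -/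
open scoped BigOperators

/-! A weight `l` is noncontextual for `p` when `p = l q + (1 - l) q'` with `q` noncontextual,
equivalently when `l q ≤ p` pointwise. Every operational equivalence of `S₁ ⊗ S₂` is an
equivalence of one factor tensored with a distribution on the other, so the product of
noncontextual models is a noncontextual model of `S₁ ⊗ S₂`; hence `l₁ q₁ ≤ p₁` and `l₂ q₂ ≤ p₂`
give `l₁ l₂ (q₁ ⊗ q₂) ≤ p₁ ⊗ p₂`. Taking suprema,
`1 - C(B₁ ⊗ B₂) ≥ (1 - C(B₁)) (1 - C(B₂))`, which is the first inequality; the second is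
`C(B₁) C(B₂) ≥ 0`. -/

open Finset

lemma IsDist.comp_equiv {X Y : Type} [Fintype X] [Fintype Y] {f : X → ℝ} (hf : IsDist f)
    (e : Y ≃ X) : IsDist (f ∘ e) :=
  ⟨fun y => hf.1 (e y), by rw [← hf.2]; exact e.sum_comp f⟩

lemma sum_prod_mul_eq_zero_of_left {A B : Type} [Fintype A] [Fintype B] {f : A → ℝ}
    (hf : ∑ a, f a = 0) (g : B → ℝ) : ∑ x : A × B, f x.1 * g x.2 = 0 := by
  rw [Fintype.sum_prod_type, ← Fintype.sum_mul_sum, hf, zero_mul]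

lemma sum_prod_mul_eq_zero_of_right {A B : Type} [Fintype A] [Fintype B] (f : A → ℝ)
    {g : B → ℝ} (hg : ∑ b, g b = 0) : ∑ x : A × B, f x.1 * g x.2 = 0 := by
  rw [Fintype.sum_prod_type, ← Fintype.sum_mul_sum, hg, mul_zero]

lemma sum_prodProdProdComm_mul {A B C D : Type} [Fintype A] [Fintype B] [Fintype C]
    [Fintype D] (f : A × C → ℝ) (g : B × D → ℝ) :
    ∑ x : (A × B) × (C × D), f (x.1.1, x.2.1) * g (x.1.2, x.2.2)
      = ∑ y : (A × C) × (B × D), f y.1 * g y.2 :=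
  Fintype.sum_equiv (Equiv.prodProdProdComm A B C D) _ _ fun _ => rfl

lemma sSup_mul_sSup_le {s t u : Set ℝ} (hs : s.Nonempty) (ht : t.Nonempty)
    (hs0 : ∀ x ∈ s, 0 ≤ x) (ht0 : ∀ y ∈ t, 0 ≤ y) (hu : BddAbove u)
    (hmul : ∀ x ∈ s, ∀ y ∈ t, x * y ∈ u) : sSup s * sSup t ≤ sSup u := by
  have hy : ∀ y ∈ t, sSup s * y ≤ sSup u := fun y hy => by
    rw [mul_comm, ← smul_eq_mul, ← Real.sSup_smul_of_nonneg (ht0 y hy)]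
    refine csSup_le_csSup hu hs.smul_set ?_
    rintro _ ⟨x, hx, rfl⟩
    simpa only [smul_eq_mul, mul_comm y x] using hmul x hx y hy
  rw [← smul_eq_mul, ← Real.sSup_smul_of_nonneg (Real.sSup_nonneg hs0)]
  refine csSup_le ht.smul_set ?_
  rintro _ ⟨y, hy', rfl⟩
  exact hy y hy'

section SingleScenario

variable {I J K : Type} [Fintype I] [Fintype J] [Fintype K]

/-- The data of `Noncontextual` over an arbitrary finite ontic type `Λ` rather than `Fin n`,
so that the ontic type of a product model can simply be `Λ₁ × Λ₂`. -/
def IsNoncontextualModel (S : Scenario I J K) {Λ : Type} [Fintype Λ] (μ : I → Λ → ℝ)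
    (ξ : Λ → J → K → ℝ) (p : I → J → K → ℝ) : Prop :=
  (∀ i, IsDist (μ i)) ∧
    (∀ l j, IsDist (ξ l j)) ∧
    (∀ i j k, p i j k = ∑ l, ξ l j k * μ i l) ∧
    (∀ s l, ∑ i, ((S.prepEq s).1 i - (S.prepEq s).2 i) * μ i l = 0) ∧
    (∀ r l, ∑ kj : K × J, ((S.measEq r).1 kj - (S.measEq r).2 kj) * ξ l kj.2 kj.1 = 0)

lemma IsNoncontextualModel.noncontextual {S : Scenario I J K} {Λ : Type} [Fintype Λ]
    {μ : I → Λ → ℝ} {ξ : Λ → J → K → ℝ} {p : I → J → K → ℝ}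
    (h : IsNoncontextualModel S μ ξ p) : Noncontextual S p := by
  obtain ⟨hμ, hξ, hp, hprep, hmeas⟩ := h
  let e := (Fintype.equivFin Λ).symm
  refine ⟨Fintype.card Λ, fun i n => μ i (e n), fun n => ξ (e n),
    fun i => (hμ i).comp_equiv e, fun n => hξ (e n), fun i j k => ?_,
    fun s l => hprep s (e l), fun r l => hmeas r (e l)⟩
  rw [hp]
  exact (e.sum_comp fun l => ξ l j k * μ i l).symm

lemma Noncontextual.isBehavior {S : Scenario I J K} {p : I → J → K → ℝ}
    (h : Noncontextual S p) : IsBehavior p := by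
  obtain ⟨n, μ, ξ, hμ, hξ, hp, -, -⟩ := h
  refine ⟨fun i j k => ?_, fun i j => ?_⟩
  · rw [hp]
    exact sum_nonneg fun l _ => mul_nonneg ((hξ l j).1 k) ((hμ i).1 l)
  · calc ∑ k, p i j k = ∑ l, (∑ k, ξ l j k) * μ i l := by
          simp only [hp, sum_mul]; exact sum_comm
      _ = 1 := by simp only [(hξ _ j).2, one_mul, (hμ i).2]

lemma IsBehavior.eq_of_le {p q : I → J → K → ℝ} (hp : IsBehavior p) (hq : IsBehavior q)
    (hle : ∀ i j k, q i j k ≤ p i j k) : p = q := by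
  funext i j k
  have hsum : ∑ k, (p i j k - q i j k) = 0 := by rw [sum_sub_distrib, hp.2, hq.2, sub_self]
  exact sub_eq_zero.1 <|
    (sum_eq_zero_iff_of_nonneg fun k _ => sub_nonneg.2 (hle i j k)).1 hsum k (mem_univ k)

def noncontextualWeights (S : Scenario I J K) (p : I → J → K → ℝ) : Set ℝ :=
  {l : ℝ | 0 ≤ l ∧ l ≤ 1 ∧ ∃ q q' : I → J → K → ℝ,
      Noncontextual S q ∧ IsBehavior q' ∧
      ∀ i j k, p i j k = l * q i j k + (1 - l) * q' i j k}

lemma ctxFraction_eq_one_sub_sSup (S : Scenario I J K) (p : I → J → K → ℝ) :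
    ctxFraction S p = 1 - sSup (noncontextualWeights S p) := rfl

lemma mem_noncontextualWeights_iff {S : Scenario I J K} {p : I → J → K → ℝ}
    (hp : IsBehavior p) {l : ℝ} :
    l ∈ noncontextualWeights S p ↔
      0 ≤ l ∧ l ≤ 1 ∧ ∃ q, Noncontextual S q ∧ ∀ i j k, l * q i j k ≤ p i j k := by
  constructor
  · rintro ⟨hl0, hl1, q, q', hq, hq', hpq⟩
    refine ⟨hl0, hl1, q, hq, fun i j k => ?_⟩
    rw [hpq]
    exact le_add_of_nonneg_right (mul_nonneg (sub_nonneg.2 hl1) (hq'.1 i j k))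
  · rintro ⟨hl0, hl1, q, hq, hle⟩
    refine ⟨hl0, hl1, q, ?_⟩
    rcases hl1.lt_or_eq with hlt | rfl
    · have hpos : 0 < 1 - l := sub_pos.2 hlt
      refine ⟨fun i j k => (p i j k - l * q i j k) / (1 - l), hq,
        ⟨fun i j k => div_nonneg (sub_nonneg.2 (hle i j k)) hpos.le, fun i j => ?_⟩,
        fun i j k => ?_⟩
      · rw [← sum_div, sum_sub_distrib, ← mul_sum, hp.2, hq.isBehavior.2, mul_one,
          div_self hpos.ne']
      · field_simp
        ring
    · have hpq : p = q := hp.eq_of_le hq.isBehavior fun i j k => by simpa using hle i j k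
      exact ⟨p, hq, hp, fun i j k => by rw [hpq]; ring⟩

lemma zero_mem_noncontextualWeights {S : Scenario I J K} {p : I → J → K → ℝ}
    (hS : {q : I → J → K → ℝ | Noncontextual S q}.Nonempty) (hp : IsBehavior p) :
    (0 : ℝ) ∈ noncontextualWeights S p := by
  obtain ⟨q, hq⟩ := hS
  exact (mem_noncontextualWeights_iff hp).2
    ⟨le_rfl, zero_le_one, q, hq, fun i j k => by simpa using hp.1 i j k⟩

lemma sSup_noncontextualWeights_le_one {S : Scenario I J K} {p : I → J → K → ℝ}
    (hS : {q : I → J → K → ℝ | Noncontextual S q}.Nonempty) (hp : IsBehavior p) :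
    sSup (noncontextualWeights S p) ≤ 1 :=
  csSup_le ⟨0, zero_mem_noncontextualWeights hS hp⟩ fun _ hl => hl.2.1

end SingleScenario

section Juxtaposition

variable {I1 J1 K1 I2 J2 K2 : Type}
    [Fintype I1] [Fintype J1] [Fintype K1] [Fintype I2] [Fintype J2] [Fintype K2]

lemma IsBehavior.prod {p1 : I1 → J1 → K1 → ℝ} {p2 : I2 → J2 → K2 → ℝ}
    (h1 : IsBehavior p1) (h2 : IsBehavior p2) : IsBehavior (prodBehavior p1 p2) :=
  ⟨fun i j k => mul_nonneg (h1.1 _ _ _) (h2.1 _ _ _), fun i j => by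
    simp only [prodBehavior, Fintype.sum_prod_type, ← Fintype.sum_mul_sum, h1.2, h2.2, mul_one]⟩

lemma IsNoncontextualModel.prod {S1 : Scenario I1 J1 K1} {S2 : Scenario I2 J2 K2}
    {Λ1 Λ2 : Type} [Fintype Λ1] [Fintype Λ2]
    {μ1 : I1 → Λ1 → ℝ} {ξ1 : Λ1 → J1 → K1 → ℝ} {q1 : I1 → J1 → K1 → ℝ}
    {μ2 : I2 → Λ2 → ℝ} {ξ2 : Λ2 → J2 → K2 → ℝ} {q2 : I2 → J2 → K2 → ℝ}
    (h1 : IsNoncontextualModel S1 μ1 ξ1 q1) (h2 : IsNoncontextualModel S2 μ2 ξ2 q2) :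
    IsNoncontextualModel (S1.prod S2) (fun i (l : Λ1 × Λ2) => μ1 i.1 l.1 * μ2 i.2 l.2)
      (fun (l : Λ1 × Λ2) j k => ξ1 l.1 j.1 k.1 * ξ2 l.2 j.2 k.2) (prodBehavior q1 q2) := by
  obtain ⟨hμ1, hξ1, hq1, hprep1, hmeas1⟩ := h1
  obtain ⟨hμ2, hξ2, hq2, hprep2, hmeas2⟩ := h2
  refine ⟨fun i => isDist_prodFun (hμ1 i.1) (hμ2 i.2),
    fun l j => isDist_prodFun (hξ1 l.1 j.1) (hξ2 l.2 j.2), fun i j k => ?_, ?_, ?_⟩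
  · simp only [prodBehavior, hq1, hq2, Fintype.sum_mul_sum, Fintype.sum_prod_type]
    exact sum_congr rfl fun _ _ => sum_congr rfl fun _ _ => by ring
  · rintro (⟨s, γ⟩ | ⟨s, γ⟩) l
    · refine (sum_congr rfl fun i _ => ?_).trans
        (sum_prod_mul_eq_zero_of_left (hprep1 s l.1) fun i2 => γ.1 i2 * μ2 i2 l.2)
      dsimp [Scenario.prod]; ring
    · refine (sum_congr rfl fun i _ => ?_).trans
        (sum_prod_mul_eq_zero_of_right (fun i1 => γ.1 i1 * μ1 i1 l.1) (hprep2 s l.2))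
      dsimp [Scenario.prod]; ring
  · rintro (⟨r, γ⟩ | ⟨r, γ⟩) l
    · refine (sum_congr rfl fun kj _ => ?_).trans ((sum_prodProdProdComm_mul
        (fun a => ((S1.measEq r).1 a - (S1.measEq r).2 a) * ξ1 l.1 a.2 a.1)
        fun b => γ.1 b * ξ2 l.2 b.2 b.1).trans
        (sum_prod_mul_eq_zero_of_left (hmeas1 r l.1) fun b => γ.1 b * ξ2 l.2 b.2 b.1))
      dsimp [Scenario.prod]; ring
    · refine (sum_congr rfl fun kj _ => ?_).trans ((sum_prodProdProdComm_mul
        (fun a => γ.1 a * ξ1 l.1 a.2 a.1)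
        fun b => ((S2.measEq r).1 b - (S2.measEq r).2 b) * ξ2 l.2 b.2 b.1).trans
        (sum_prod_mul_eq_zero_of_right (fun a => γ.1 a * ξ1 l.1 a.2 a.1) (hmeas2 r l.2)))
      dsimp [Scenario.prod]; ring

lemma Noncontextual.prod {S1 : Scenario I1 J1 K1} {S2 : Scenario I2 J2 K2}
    {q1 : I1 → J1 → K1 → ℝ} {q2 : I2 → J2 → K2 → ℝ}
    (h1 : Noncontextual S1 q1) (h2 : Noncontextual S2 q2) :
    Noncontextual (S1.prod S2) (prodBehavior q1 q2) := by
  obtain ⟨n1, μ1, ξ1, hm1⟩ := h1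
  obtain ⟨n2, μ2, ξ2, hm2⟩ := h2
  exact (IsNoncontextualModel.prod hm1 hm2).noncontextual

lemma mul_mem_noncontextualWeights_prod {S1 : Scenario I1 J1 K1} {S2 : Scenario I2 J2 K2}
    {p1 : I1 → J1 → K1 → ℝ} {p2 : I2 → J2 → K2 → ℝ}
    (hp1 : IsBehavior p1) (hp2 : IsBehavior p2) {l1 l2 : ℝ}
    (hl1 : l1 ∈ noncontextualWeights S1 p1) (hl2 : l2 ∈ noncontextualWeights S2 p2) :
    l1 * l2 ∈ noncontextualWeights (S1.prod S2) (prodBehavior p1 p2) := by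
  obtain ⟨hl10, hl11, q1, hq1, hle1⟩ := (mem_noncontextualWeights_iff hp1).1 hl1
  obtain ⟨hl20, hl21, q2, hq2, hle2⟩ := (mem_noncontextualWeights_iff hp2).1 hl2
  refine (mem_noncontextualWeights_iff (hp1.prod hp2)).2 ⟨mul_nonneg hl10 hl20,
    mul_le_one₀ hl11 hl20 hl21, prodBehavior q1 q2, hq1.prod hq2, fun i j k => ?_⟩
  calc l1 * l2 * prodBehavior q1 q2 i j k
      = (l1 * q1 i.1 j.1 k.1) * (l2 * q2 i.2 j.2 k.2) := by rw [prodBehavior]; ring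
    _ ≤ p1 i.1 j.1 k.1 * p2 i.2 j.2 k.2 :=
      mul_le_mul (hle1 _ _ _) (hle2 _ _ _)
        (mul_nonneg hl20 (hq2.isBehavior.1 _ _ _)) (hp1.1 _ _ _)

end Juxtaposition

theorem ctxFraction_subadditive_general
    {I1 J1 K1 I2 J2 K2 : Type}
    [Fintype I1] [Fintype J1] [Fintype K1] [Fintype I2] [Fintype J2] [Fintype K2]
    (S1 : Scenario I1 J1 K1) (S2 : Scenario I2 J2 K2)
    (p1 : I1 → J1 → K1 → ℝ) (p2 : I2 → J2 → K2 → ℝ)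
    (hp1 : IsBehavior p1) (hp2 : IsBehavior p2)
    (h1 : {q : I1 → J1 → K1 → ℝ | Noncontextual S1 q}.Nonempty)
    (h2 : {q : I2 → J2 → K2 → ℝ | Noncontextual S2 q}.Nonempty) :
    ctxFraction (S1.prod S2) (prodBehavior p1 p2)
        ≤ ctxFraction S1 p1 + ctxFraction S2 p2
            - ctxFraction S1 p1 * ctxFraction S2 p2 ∧
      ctxFraction S1 p1 + ctxFraction S2 p2 - ctxFraction S1 p1 * ctxFraction S2 p2
        ≤ ctxFraction S1 p1 + ctxFraction S2 p2 := by
  have hmul : sSup (noncontextualWeights S1 p1) * sSup (noncontextualWeights S2 p2)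
      ≤ sSup (noncontextualWeights (S1.prod S2) (prodBehavior p1 p2)) :=
    sSup_mul_sSup_le ⟨0, zero_mem_noncontextualWeights h1 hp1⟩
      ⟨0, zero_mem_noncontextualWeights h2 hp2⟩ (fun _ hl => hl.1) (fun _ hl => hl.1)
      ⟨1, fun _ hl => hl.2.1⟩
      fun _ hl1 _ hl2 => mul_mem_noncontextualWeights_prod hp1 hp2 hl1 hl2
  have hs1 := sSup_noncontextualWeights_le_one h1 hp1
  have hs2 := sSup_noncontextualWeights_le_one h2 hp2
  simp only [ctxFraction_eq_one_sub_sSup]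
  constructor <;> nlinarith

/-- the contextual fraction is subadditive under independent
juxtapositions. -/
theorem ctxFraction_subadditive
    {I1 J1 K1 I2 J2 K2 : Type}
    [Fintype I1] [Fintype J1] [Fintype K1] [Fintype I2] [Fintype J2] [Fintype K2]
    [Nonempty I1] [Nonempty J1] [Nonempty K1] [Nonempty I2] [Nonempty J2] [Nonempty K2]
    (S1 : Scenario I1 J1 K1) (S2 : Scenario I2 J2 K2)
    (p1 : I1 → J1 → K1 → ℝ) (p2 : I2 → J2 → K2 → ℝ)
    (hp1 : IsBehavior p1) (hp2 : IsBehavior p2)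
    (h1 : {q : I1 → J1 → K1 → ℝ | Noncontextual S1 q}.Nonempty)
    (h2 : {q : I2 → J2 → K2 → ℝ | Noncontextual S2 q}.Nonempty)
    (h12 : {q : I1 × I2 → J1 × J2 → K1 × K2 → ℝ |
        Noncontextual (S1.prod S2) q}.Nonempty) :
    ctxFraction (S1.prod S2) (prodBehavior p1 p2)
        ≤ ctxFraction S1 p1 + ctxFraction S2 p2
            - ctxFraction S1 p1 * ctxFraction S2 p2 ∧
      ctxFraction S1 p1 + ctxFraction S2 p2 - ctxFraction S1 p1 * ctxFraction S2 p2
        ≤ ctxFraction S1 p1 + ctxFraction S2 p2 :=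
  ctxFraction_subadditive_general S1 S2 p1 p2 hp1 hp2 h1 h2
end

section
/- The robustness of contextuality is a monotone under free operations: let S and S̃ be scenarios with NC(S) and NC(S̃) nonempty, and let T be a free operation from behaviors in S to behaviors in S̃ that maps NC(S) into NC(S̃). Then for every behavior B in S, R(T(B)) ≤ R(B), where R(T(B)) is computed in the scenario S̃ and R(B) in the scenario S. -/
open scoped BigOperators

lemma FreeOp.apply_combo {I J K I' J' K' : Type}
    [Fintype I] [Fintype J] [Fintype K] [Fintype I'] [Fintype J'] [Fintype K']
    (T : FreeOp I J K I' J' K') (a b : ℝ) (q p : I → J → K → ℝ) :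
    T.apply (fun i j k => a * q i j k + b * p i j k)
      = fun i' j' k' => a * T.apply q i' j' k' + b * T.apply p i' j' k' := by
  funext i' j' k'
  simp only [FreeOp.apply, mul_add, add_mul, Finset.sum_add_distrib, Finset.mul_sum]
  congr 1 <;>
    refine Finset.sum_congr rfl fun i _ => Finset.sum_congr rfl fun j _ =>
      Finset.sum_congr rfl fun k _ => by ring

/-- the robustness of contextuality is a monotone under free
operations mapping the noncontextual set into the noncontextual set. -/
theorem robustness_monotone
    {I J K I' J' K' : Type}
    [Fintype I] [Fintype J] [Fintype K] [Fintype I'] [Fintype J'] [Fintype K']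
    [Nonempty I] [Nonempty J] [Nonempty K] [Nonempty I'] [Nonempty J'] [Nonempty K']
    (S : Scenario I J K) (S' : Scenario I' J' K')
    (hS : {q : I → J → K → ℝ | Noncontextual S q}.Nonempty)
    (hS' : {q : I' → J' → K' → ℝ | Noncontextual S' q}.Nonempty)
    (T : FreeOp I J K I' J' K')
    (hT : ∀ q : I → J → K → ℝ, Noncontextual S q → Noncontextual S' (T.apply q))
    (p : I → J → K → ℝ) (hp : IsBehavior p) :
    robustness S' (T.apply p) ≤ robustness S p := by
  apply csInf_le_csInf
  · exact ⟨0, fun x hx => hx.1⟩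
  · obtain ⟨q, hq⟩ := hS
    exact ⟨1, zero_le_one, le_refl 1, q, hq, by
      simpa [one_mul, sub_self, zero_mul, add_zero] using hq⟩
  · rintro l ⟨hl0, hl1, q, hq, hmix⟩
    refine ⟨hl0, hl1, T.apply q, hT q hq, ?_⟩
    have h2 := hT _ hmix
    rwa [T.apply_combo l (1 - l) q p] at h2
end

section
/- The reference-state robustness is a monotone under reference-preserving free operations: let S be a scenario with NC(S) nonempty, let B_ref ∈ NC(S) be a fixed noncontextual behavior, and let T be a free operation from behaviors in S to behaviors in S that maps NC(S) into NC(S) and satisfies T(B_ref) = B_ref. Then for every behavior B in S, R_ref(T(B)) ≤ R_ref(B). -/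
open scoped BigOperators

/-- the reference-state robustness is a monotone under
reference-preserving free operations. -/
theorem refRobustness_monotone
    {I J K : Type} [Fintype I] [Fintype J] [Fintype K]
    [Nonempty I] [Nonempty J] [Nonempty K]
    (S : Scenario I J K)
    (hS : {q : I → J → K → ℝ | Noncontextual S q}.Nonempty)
    (pref : I → J → K → ℝ) (href : Noncontextual S pref)
    (T : FreeOp I J K I J K)
    (hT : ∀ q : I → J → K → ℝ, Noncontextual S q → Noncontextual S (T.apply q))
    (hfix : T.apply pref = pref)
    (p : I → J → K → ℝ) (hp : IsBehavior p) :
    refRobustness S pref (T.apply p) ≤ refRobustness S pref p := by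
  have key : ∀ l : ℝ,
      T.apply (fun i j k => l * pref i j k + (1 - l) * p i j k)
        = fun i j k => l * pref i j k + (1 - l) * T.apply p i j k := by
    intro l
    funext i' j' k'
    have hfix' : (∑ i, ∑ j, ∑ k, T.qO j' k k' * pref i j k * T.qM j' j * T.qP i' i)
        = pref i' j' k' := congrFun (congrFun (congrFun hfix i') j') k'
    show (∑ i, ∑ j, ∑ k,
        T.qO j' k k' * (l * pref i j k + (1 - l) * p i j k) * T.qM j' j * T.qP i' i) = _
    have : (∑ i, ∑ j, ∑ k,
        T.qO j' k k' * (l * pref i j k + (1 - l) * p i j k) * T.qM j' j * T.qP i' i)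
        = (∑ i, ∑ j, ∑ k, (l * (T.qO j' k k' * pref i j k * T.qM j' j * T.qP i' i)
            + (1 - l) * (T.qO j' k k' * p i j k * T.qM j' j * T.qP i' i))) := by
      refine Finset.sum_congr rfl fun i _ => Finset.sum_congr rfl fun j _ =>
        Finset.sum_congr rfl fun k _ => by ring
    rw [this]
    simp only [Finset.sum_add_distrib, ← Finset.mul_sum]
    rw [hfix']
    rfl
  refine csInf_le_csInf ⟨0, fun x hx => hx.1⟩ ?_ ?_
  · refine ⟨1, zero_le_one, le_refl (1:ℝ), ?_⟩
    have : (fun i j k => (1 : ℝ) * pref i j k + (1 - 1) * p i j k) = pref := by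
      funext i j k; ring
    rw [this]; exact href
  · rintro l ⟨h0, h1, hnc⟩
    exact ⟨h0, h1, key l ▸ hT _ hnc⟩
end

section
/- The relative entropy of contextuality is a monotone under free operations: let S and S̃ be scenarios with NC(S) and NC(S̃) nonempty, and let T be a free operation from behaviors in S to behaviors in S̃ that maps NC(S) into NC(S̃). Then for every behavior B in S, KL(T(B)) ≤ KL(B), where KL(T(B)) is computed in the scenario S̃ and KL(B) in the scenario S. -/
open scoped BigOperators

section AuxLemmas

open Real

lemma myCoe_finset_sum {α : Type*} (s : Finset α) (f : α → ℝ) :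
    ((∑ x ∈ s, f x : ℝ) : EReal) = ∑ x ∈ s, (f x : EReal) := by
  induction s using Finset.cons_induction with
  | empty => simp
  | cons a s ha ih => rw [Finset.sum_cons, Finset.sum_cons, EReal.coe_add, ih]

lemma klTerm_ne_bot (p q : ℝ) : klTerm p q ≠ ⊥ := by
  unfold klTerm
  split_ifs
  · simp
  · simp
  · exact EReal.coe_ne_bot _

lemma klTerm_coe {p q : ℝ} (h : q = 0 → p = 0) :
    klTerm p q = ((p * Real.log (p / q) : ℝ) : EReal) := by
  unfold klTerm
  split_ifs with h1 h2
  · simp [h1]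
  · exact absurd (h h2) h1
  · rfl

lemma sum_klTerm_coe {α : Type} [Fintype α] {a b : α → ℝ} (h : ∀ x, b x = 0 → a x = 0) :
    ∑ x, klTerm (a x) (b x) = ((∑ x, a x * Real.log (a x / b x) : ℝ) : EReal) := by
  rw [myCoe_finset_sum]
  exact Finset.sum_congr rfl fun x _ => klTerm_coe (h x)

lemma ereal_sum_ne_bot {α : Type*} (s : Finset α) (f : α → EReal) (h : ∀ x ∈ s, f x ≠ ⊥) :
    ∑ x ∈ s, f x ≠ ⊥ := by
  induction s using Finset.cons_induction with
  | empty => simp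
  | cons a s ha ih =>
    rw [Finset.sum_cons, Ne, EReal.add_eq_bot_iff]
    push_neg
    exact ⟨h a (Finset.mem_cons_self a s), ih fun x hx => h x (Finset.mem_cons.2 (Or.inr hx))⟩

lemma ereal_sum_eq_top {α : Type*} {s : Finset α} {f : α → EReal} (h : ∀ x ∈ s, f x ≠ ⊥)
    {x0 : α} (hx0 : x0 ∈ s) (ht : f x0 = ⊤) : ∑ x ∈ s, f x = ⊤ := by
  classical
  rw [← Finset.add_sum_erase s f hx0, ht]
  exact EReal.top_add_of_ne_bot
    (ereal_sum_ne_bot _ _ fun x hx => h x (Finset.mem_of_mem_erase hx))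

/-- The log-sum inequality. -/
lemma log_sum_ineq {α : Type} [Fintype α] (a b : α → ℝ)
    (ha : ∀ x, 0 ≤ a x) (hb : ∀ x, 0 ≤ b x) (hab : ∀ x, b x = 0 → a x = 0) :
    (∑ x, a x) * Real.log ((∑ x, a x) / (∑ x, b x))
      ≤ ∑ x, a x * Real.log (a x / b x) := by
  classical
  by_cases hB : ∑ x, b x = 0
  · have hb0 : ∀ x ∈ Finset.univ, b x = 0 :=
      (Finset.sum_eq_zero_iff_of_nonneg (fun x _ => hb x)).1 hB
    have ha0 : ∀ x : α, a x = 0 := fun x => hab x (hb0 x (Finset.mem_univ x))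
    simp [ha0]
  · have hBpos : 0 < ∑ x, b x :=
      lt_of_le_of_ne (Finset.sum_nonneg fun x _ => hb x) (Ne.symm hB)
    set B := ∑ x, b x with hBdef
    set t := Finset.univ.filter (fun x => b x ≠ 0) with ht
    have hbt : ∀ x ∈ t, b x ≠ 0 := fun x hx => (Finset.mem_filter.1 hx).2
    have hb_off : ∀ x ∈ Finset.univ, x ∉ t → b x = 0 := by
      intro x _ hx
      by_contra hbx
      exact hx (Finset.mem_filter.2 ⟨Finset.mem_univ x, hbx⟩)
    have hA : ∑ x, a x = ∑ x ∈ t, a x := by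
      symm
      apply Finset.sum_subset (Finset.filter_subset _ _)
      intro x hxu hx
      exact hab x (hb_off x hxu hx)
    have hBt : B = ∑ x ∈ t, b x := by
      rw [hBdef]
      symm
      exact Finset.sum_subset (Finset.filter_subset _ _) hb_off
    have hR : ∑ x, a x * Real.log (a x / b x) = ∑ x ∈ t, a x * Real.log (a x / b x) := by
      symm
      apply Finset.sum_subset (Finset.filter_subset _ _)
      intro x hxu hx
      rw [hab x (hb_off x hxu hx), zero_mul]
    have hB' : B ≠ 0 := ne_of_gt hBpos
    have hJ := Real.convexOn_mul_log.map_sum_le (t := t)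
      (w := fun x => b x / B) (p := fun x => a x / b x)
      (fun x _ => div_nonneg (hb x) hBpos.le)
      (by rw [← Finset.sum_div, ← hBt, div_self hB'])
      (fun x _ => Set.mem_Ici.2 (div_nonneg (ha x) (hb x)))
    have hz : ∑ x ∈ t, (b x / B) • (a x / b x) = (∑ x, a x) / B := by
      rw [hA, Finset.sum_div]
      refine Finset.sum_congr rfl fun x hx => ?_
      have hbx := hbt x hx
      rw [smul_eq_mul]
      field_simp
    have hw : ∑ x ∈ t, (b x / B) • ((a x / b x) * Real.log (a x / b x))
        = (∑ x, a x * Real.log (a x / b x)) / B := by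
      rw [hR, Finset.sum_div]
      refine Finset.sum_congr rfl fun x hx => ?_
      have hbx := hbt x hx
      rw [smul_eq_mul]
      field_simp
    rw [hz, hw] at hJ
    have hJ' : ((∑ x, a x) * Real.log ((∑ x, a x) / B)) / B
        ≤ (∑ x, a x * Real.log (a x / b x)) / B := by
      rw [div_mul_eq_mul_div] at hJ
      exact hJ
    exact (div_le_div_iff_of_pos_right hBpos).1 hJ'

lemma my_mul_log_div_mul (d pv qv : ℝ) :
    (d * pv) * Real.log ((d * pv) / (d * qv)) = d * (pv * Real.log (pv / qv)) := by
  rcases eq_or_ne d 0 with h | h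
  · simp [h]
  · rw [mul_div_mul_left _ _ h]; ring

lemma my_term_eq (c pv qv m1 m2 : ℝ) :
    (c * pv * m1 * m2) * Real.log ((c * pv * m1 * m2) / (c * qv * m1 * m2))
      = c * ((m1 * m2) * (pv * Real.log (pv / qv))) := by
  have e1 : c * pv * m1 * m2 = (c * m1 * m2) * pv := by ring
  have e2 : c * qv * m1 * m2 = (c * m1 * m2) * qv := by ring
  rw [e1, e2, my_mul_log_div_mul]
  ring

lemma my_abs_mul (c pv qv m1 m2 : ℝ) (h : qv = 0 → pv = 0) :
    c * qv * m1 * m2 = 0 → c * pv * m1 * m2 = 0 := by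
  intro h0
  rcases eq_or_ne qv 0 with hv | hv
  · rw [h hv, mul_zero, zero_mul, zero_mul]
  · rcases mul_eq_zero.1 h0 with h1 | h1
    · rcases mul_eq_zero.1 h1 with h2 | h2
      · rcases mul_eq_zero.1 h2 with h3 | h3
        · rw [h3, zero_mul, zero_mul, zero_mul]
        · exact absurd h3 hv
      · rw [h2, mul_zero, zero_mul]
    · rw [h1, mul_zero]

end AuxLemmas

section Channel

variable {I J K I' J' K' : Type}
  [Fintype I] [Fintype J] [Fintype K] [Fintype I'] [Fintype J'] [Fintype K']

lemma apply_term_sum (T : FreeOp I J K I' J' K') (p : I → J → K → ℝ)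
    (i' : I') (j' : J') (k' : K') :
    T.apply p i' j' k' = ∑ x : I × J × K,
      T.qO j' x.2.2 k' * p x.1 x.2.1 x.2.2 * T.qM j' x.2.1 * T.qP i' x.1 := by
  simp only [FreeOp.apply, Fintype.sum_prod_type]

lemma channel_key (T : FreeOp I J K I' J' K') (p q : I → J → K → ℝ)
    (hp : ∀ i j k, 0 ≤ p i j k) (hq : ∀ i j k, 0 ≤ q i j k)
    (habs : ∀ i j k, q i j k = 0 → p i j k = 0) (i' : I') (j' : J') :
    ∑ k', T.apply p i' j' k' * Real.log (T.apply p i' j' k' / T.apply q i' j' k')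
      ≤ ∑ i, ∑ j, (T.qM j' j * T.qP i' i) *
          ∑ k, p i j k * Real.log (p i j k / q i j k) := by
  have step1 : ∀ k' : K',
      T.apply p i' j' k' * Real.log (T.apply p i' j' k' / T.apply q i' j' k')
        ≤ ∑ x : I × J × K,
            (T.qO j' x.2.2 k' * p x.1 x.2.1 x.2.2 * T.qM j' x.2.1 * T.qP i' x.1) *
              Real.log ((T.qO j' x.2.2 k' * p x.1 x.2.1 x.2.2 * T.qM j' x.2.1 * T.qP i' x.1) /
                (T.qO j' x.2.2 k' * q x.1 x.2.1 x.2.2 * T.qM j' x.2.1 * T.qP i' x.1)) := by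
    intro k'
    rw [apply_term_sum, apply_term_sum]
    refine log_sum_ineq _ _
      (fun x => mul_nonneg (mul_nonneg (mul_nonneg ((T.qO_dist j' x.2.2).1 k')
        (hp x.1 x.2.1 x.2.2)) ((T.qM_dist j').1 x.2.1)) ((T.qP_dist i').1 x.1))
      (fun x => mul_nonneg (mul_nonneg (mul_nonneg ((T.qO_dist j' x.2.2).1 k')
        (hq x.1 x.2.1 x.2.2)) ((T.qM_dist j').1 x.2.1)) ((T.qP_dist i').1 x.1))
      (fun x => my_abs_mul _ _ _ _ _ (habs x.1 x.2.1 x.2.2))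
  calc ∑ k', T.apply p i' j' k' * Real.log (T.apply p i' j' k' / T.apply q i' j' k')
      ≤ ∑ k', ∑ x : I × J × K,
          (T.qO j' x.2.2 k' * p x.1 x.2.1 x.2.2 * T.qM j' x.2.1 * T.qP i' x.1) *
            Real.log ((T.qO j' x.2.2 k' * p x.1 x.2.1 x.2.2 * T.qM j' x.2.1 * T.qP i' x.1) /
              (T.qO j' x.2.2 k' * q x.1 x.2.1 x.2.2 * T.qM j' x.2.1 * T.qP i' x.1)) :=
        Finset.sum_le_sum fun k' _ => step1 k'
    _ = ∑ x : I × J × K, ∑ k',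
          (T.qO j' x.2.2 k' * p x.1 x.2.1 x.2.2 * T.qM j' x.2.1 * T.qP i' x.1) *
            Real.log ((T.qO j' x.2.2 k' * p x.1 x.2.1 x.2.2 * T.qM j' x.2.1 * T.qP i' x.1) /
              (T.qO j' x.2.2 k' * q x.1 x.2.1 x.2.2 * T.qM j' x.2.1 * T.qP i' x.1)) :=
        Finset.sum_comm
    _ = ∑ x : I × J × K, (T.qM j' x.2.1 * T.qP i' x.1) *
          (p x.1 x.2.1 x.2.2 * Real.log (p x.1 x.2.1 x.2.2 / q x.1 x.2.1 x.2.2)) := by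
        refine Finset.sum_congr rfl fun x _ => ?_
        rw [Finset.sum_congr rfl fun k' _ => my_term_eq (T.qO j' x.2.2 k') _ _ _ _]
        rw [← Finset.sum_mul, (T.qO_dist j' x.2.2).2, one_mul]
    _ = ∑ i, ∑ j, (T.qM j' j * T.qP i' i) *
          ∑ k, p i j k * Real.log (p i j k / q i j k) := by
        rw [Fintype.sum_prod_type]
        refine Finset.sum_congr rfl fun i _ => ?_
        rw [Fintype.sum_prod_type]
        refine Finset.sum_congr rfl fun j _ => ?_
        rw [Finset.mul_sum]

lemma DKL_apply_le [Nonempty I] [Nonempty J]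
    (T : FreeOp I J K I' J' K') (p q : I → J → K → ℝ)
    (hp : ∀ i j k, 0 ≤ p i j k) (hq : ∀ i j k, 0 ≤ q i j k) :
    DKL (T.apply p) (T.apply q) ≤ DKL p q := by
  by_cases htop : DKL p q = ⊤
  · rw [htop]; exact le_top
  have habs : ∀ i j k, q i j k = 0 → p i j k = 0 := by
    intro i j k hq0
    by_contra hp0
    apply htop
    have hterm : klTerm (p i j k) (q i j k) = ⊤ := by
      unfold klTerm
      rw [if_neg hp0, if_pos hq0]
    have hsum : ∑ k, klTerm (p i j k) (q i j k) = ⊤ :=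
      ereal_sum_eq_top (fun k _ => klTerm_ne_bot _ _) (Finset.mem_univ k) hterm
    have h1 : (⊤ : EReal) ≤ DKL p q := by
      rw [← hsum]
      exact le_iSup_of_le i (le_iSup (fun j => ∑ k, klTerm (p i j k) (q i j k)) j)
    exact top_le_iff.1 h1
  have habs' : ∀ i' j' k', T.apply q i' j' k' = 0 → T.apply p i' j' k' = 0 := by
    intro i' j' k' h0
    rw [apply_term_sum] at h0 ⊢
    have hall := (Finset.sum_eq_zero_iff_of_nonneg (fun x _ =>
      mul_nonneg (mul_nonneg (mul_nonneg ((T.qO_dist j' x.2.2).1 k')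
        (hq x.1 x.2.1 x.2.2)) ((T.qM_dist j').1 x.2.1)) ((T.qP_dist i').1 x.1))).1 h0
    exact Finset.sum_eq_zero fun x _ =>
      my_abs_mul _ _ _ _ _ (habs x.1 x.2.1 x.2.2) (hall x (Finset.mem_univ x))
  show (⨆ i' : I', ⨆ j' : J', ∑ k' : K', klTerm (T.apply p i' j' k') (T.apply q i' j' k'))
      ≤ DKL p q
  refine iSup_le fun i' => iSup_le fun j' => ?_
  rw [sum_klTerm_coe (fun k' => habs' i' j' k')]
  obtain ⟨x0, -, hx0⟩ := Finset.exists_max_image (Finset.univ : Finset (I × J))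
    (fun x => ∑ k, p x.1 x.2 k * Real.log (p x.1 x.2 k / q x.1 x.2 k)) Finset.univ_nonempty
  have hL : (∑ k', T.apply p i' j' k' * Real.log (T.apply p i' j' k' / T.apply q i' j' k'))
      ≤ ∑ k, p x0.1 x0.2 k * Real.log (p x0.1 x0.2 k / q x0.1 x0.2 k) := by
    refine le_trans (channel_key T p q hp hq habs i' j') ?_
    calc ∑ i, ∑ j, (T.qM j' j * T.qP i' i) * ∑ k, p i j k * Real.log (p i j k / q i j k)
        ≤ ∑ i, ∑ j, (T.qM j' j * T.qP i' i) *
            ∑ k, p x0.1 x0.2 k * Real.log (p x0.1 x0.2 k / q x0.1 x0.2 k) := by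
          refine Finset.sum_le_sum fun i _ => Finset.sum_le_sum fun j _ => ?_
          exact mul_le_mul_of_nonneg_left (hx0 (i, j) (Finset.mem_univ _))
            (mul_nonneg ((T.qM_dist j').1 j) ((T.qP_dist i').1 i))
      _ = ∑ k, p x0.1 x0.2 k * Real.log (p x0.1 x0.2 k / q x0.1 x0.2 k) := by
          set C := ∑ k, p x0.1 x0.2 k * Real.log (p x0.1 x0.2 k / q x0.1 x0.2 k) with hC
          have h1 : ∀ i, ∑ j, (T.qM j' j * T.qP i' i) * C = T.qP i' i * C := by
            intro i
            rw [Finset.sum_congr rfl fun j (_ : j ∈ Finset.univ) =>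
              (by ring : (T.qM j' j * T.qP i' i) * C = T.qM j' j * (T.qP i' i * C))]
            rw [← Finset.sum_mul, (T.qM_dist j').2, one_mul]
          rw [Finset.sum_congr rfl fun i (_ : i ∈ Finset.univ) => h1 i,
            ← Finset.sum_mul, (T.qP_dist i').2, one_mul]
  calc ((∑ k', T.apply p i' j' k' *
        Real.log (T.apply p i' j' k' / T.apply q i' j' k') : ℝ) : EReal)
      ≤ ((∑ k, p x0.1 x0.2 k * Real.log (p x0.1 x0.2 k / q x0.1 x0.2 k) : ℝ) : EReal) :=
        EReal.coe_le_coe_iff.2 hL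
    _ = ∑ k, klTerm (p x0.1 x0.2 k) (q x0.1 x0.2 k) :=
        (sum_klTerm_coe fun k => habs x0.1 x0.2 k).symm
    _ ≤ DKL p q := le_iSup_of_le x0.1
        (le_iSup (fun j => ∑ k, klTerm (p x0.1 j k) (q x0.1 j k)) x0.2)

end Channel

/-- the relative entropy of contextuality is a monotone under free
operations mapping the noncontextual set into the noncontextual set. -/
theorem relEntCtx_monotone
    {I J K I' J' K' : Type}
    [Fintype I] [Fintype J] [Fintype K] [Fintype I'] [Fintype J'] [Fintype K']
    [Nonempty I] [Nonempty J] [Nonempty K] [Nonempty I'] [Nonempty J'] [Nonempty K']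
    (S : Scenario I J K) (S' : Scenario I' J' K')
    (hS : {q : I → J → K → ℝ | Noncontextual S q}.Nonempty)
    (hS' : {q : I' → J' → K' → ℝ | Noncontextual S' q}.Nonempty)
    (T : FreeOp I J K I' J' K')
    (hT : ∀ q : I → J → K → ℝ, Noncontextual S q → Noncontextual S' (T.apply q))
    (p : I → J → K → ℝ) (hp : IsBehavior p) :
    relEntCtx S' (T.apply p) ≤ relEntCtx S p := by
  refine le_iInf fun q => le_iInf fun hq => ?_
  have hq0 : ∀ i j k, 0 ≤ q i j k := by
    obtain ⟨n, mu, xi, hmu, hxi, heq, -, -⟩ := hq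
    intro i j k
    rw [heq]
    exact Finset.sum_nonneg fun l _ => mul_nonneg ((hxi l j).1 k) ((hmu i).1 l)
  calc relEntCtx S' (T.apply p)
      ≤ DKL (T.apply p) (T.apply q) := iInf₂_le (T.apply q) (hT q hq)
    _ ≤ DKL p q := DKL_apply_le T p q (fun i j k => hp.1 i j k) hq0
end

section
/- The ℓ1-contextuality distance is a monotone under free operations: let S and S̃ be scenarios with NC(S) and NC(S̃) nonempty, and let T be a free operation from behaviors in S to behaviors in S̃ that maps NC(S) into NC(S̃). Then for every behavior B in S, D(T(B)) ≤ D(B), where D(T(B)) is computed in the scenario S̃ and D(B) in the scenario S. -/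
open scoped BigOperators

lemma D1_nonneg {I J K : Type} [Fintype I] [Fintype J] [Fintype K]
    [Nonempty I] [Nonempty J]
    (p q : I → J → K → ℝ) : 0 ≤ D1 p q := by
  have : Nonempty (I × J) := inferInstance
  exact Real.iSup_nonneg fun ij => Finset.sum_nonneg fun k _ => abs_nonneg _

lemma D1_apply_le {I J K I' J' K' : Type}
    [Fintype I] [Fintype J] [Fintype K] [Fintype I'] [Fintype J'] [Fintype K']
    [Nonempty I] [Nonempty J] [Nonempty I'] [Nonempty J']
    (T : FreeOp I J K I' J' K') (p q : I → J → K → ℝ) :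
    D1 (T.apply p) (T.apply q) ≤ D1 p q := by
  apply ciSup_le
  rintro ⟨i', j'⟩
  have hbound : ∀ i j, ∑ k, |p i j k - q i j k| ≤ D1 p q := by
    intro i j
    unfold D1
    exact le_ciSup (Set.Finite.bddAbove (Set.finite_range
      (fun ij : I × J => ∑ k, |p ij.1 ij.2 k - q ij.1 ij.2 k|))) ((i, j) : I × J)
  have hqO := fun k => T.qO_dist j' k
  have hqM := T.qM_dist j'
  have hqP := T.qP_dist i'
  calc ∑ k', |T.apply p i' j' k' - T.apply q i' j' k'|
      ≤ ∑ k', ∑ i, ∑ j, ∑ k,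
          T.qO j' k k' * |p i j k - q i j k| * T.qM j' j * T.qP i' i := by
        apply Finset.sum_le_sum
        intro k' _
        unfold FreeOp.apply
        rw [← Finset.sum_sub_distrib]
        refine (Finset.abs_sum_le_sum_abs _ _).trans (Finset.sum_le_sum fun i _ => ?_)
        rw [← Finset.sum_sub_distrib]
        refine (Finset.abs_sum_le_sum_abs _ _).trans (Finset.sum_le_sum fun j _ => ?_)
        rw [← Finset.sum_sub_distrib]
        refine (Finset.abs_sum_le_sum_abs _ _).trans (Finset.sum_le_sum fun k _ => ?_)
        have : T.qO j' k k' * p i j k * T.qM j' j * T.qP i' i -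
            T.qO j' k k' * q i j k * T.qM j' j * T.qP i' i =
            T.qO j' k k' * (p i j k - q i j k) * T.qM j' j * T.qP i' i := by ring
        rw [this, abs_mul, abs_mul, abs_mul,
          abs_of_nonneg ((hqO k).1 k'), abs_of_nonneg (hqM.1 j), abs_of_nonneg (hqP.1 i)]
    _ = ∑ i, ∑ j, (∑ k, |p i j k - q i j k|) * (T.qM j' j * T.qP i' i) := by
        rw [Finset.sum_comm]
        refine Finset.sum_congr rfl fun i _ => ?_
        rw [Finset.sum_comm]
        refine Finset.sum_congr rfl fun j _ => ?_
        rw [Finset.sum_comm]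
        conv_rhs => rw [Finset.sum_mul]
        refine Finset.sum_congr rfl fun k _ => ?_
        rw [← Finset.sum_mul, ← Finset.sum_mul, ← Finset.sum_mul,
          (hqO k).2, one_mul, mul_assoc]
    _ ≤ ∑ i, ∑ j, D1 p q * (T.qM j' j * T.qP i' i) := by
        refine Finset.sum_le_sum fun i _ => Finset.sum_le_sum fun j _ => ?_
        exact mul_le_mul_of_nonneg_right (hbound i j)
          (mul_nonneg (hqM.1 j) (hqP.1 i))
    _ = D1 p q := by
        have h1 : ∀ i, ∑ j, D1 p q * (T.qM j' j * T.qP i' i) = D1 p q * T.qP i' i := by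
          intro i
          have h2 : ∀ j, D1 p q * (T.qM j' j * T.qP i' i)
              = (D1 p q * T.qP i' i) * T.qM j' j := fun j => by ring
          simp only [h2]
          rw [← Finset.mul_sum, hqM.2, mul_one]
        simp only [h1]
        rw [← Finset.mul_sum, hqP.2, mul_one]

/-- the ℓ1-contextuality distance is a monotone under free
operations mapping the noncontextual set into the noncontextual set. -/
theorem l1CtxDistance_monotone
    {I J K I' J' K' : Type}
    [Fintype I] [Fintype J] [Fintype K] [Fintype I'] [Fintype J'] [Fintype K']
    [Nonempty I] [Nonempty J] [Nonempty K] [Nonempty I'] [Nonempty J'] [Nonempty K']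
    (S : Scenario I J K) (S' : Scenario I' J' K')
    (hS : {q : I → J → K → ℝ | Noncontextual S q}.Nonempty)
    (hS' : {q : I' → J' → K' → ℝ | Noncontextual S' q}.Nonempty)
    (T : FreeOp I J K I' J' K')
    (hT : ∀ q : I → J → K → ℝ, Noncontextual S q → Noncontextual S' (T.apply q))
    (p : I → J → K → ℝ) (hp : IsBehavior p) :
    l1CtxDistance S' (T.apply p) ≤ l1CtxDistance S p := by
  unfold l1CtxDistance
  have hbdd : BddBelow {d : ℝ | ∃ q : I' → J' → K' → ℝ,
      Noncontextual S' q ∧ D1 (T.apply p) q = d} := by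
    refine ⟨0, ?_⟩
    rintro d ⟨q, -, rfl⟩
    exact D1_nonneg _ _
  obtain ⟨q₀, hq₀⟩ := hS
  refine le_csInf ⟨D1 p q₀, q₀, hq₀, rfl⟩ ?_
  rintro d ⟨q, hq, rfl⟩
  calc sInf {d : ℝ | ∃ q : I' → J' → K' → ℝ,
        Noncontextual S' q ∧ D1 (T.apply p) q = d}
      ≤ D1 (T.apply p) (T.apply q) := csInf_le hbdd ⟨T.apply q, hT q hq, rfl⟩
    _ ≤ D1 p q := D1_apply_le T p q
end
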